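/- arXiv:1702.04002 — 10 statements merged into one kernel-verified Lean document; each statement's English description precedes it below -/
import Mathlib

section
/- Let X be a real vector space and q an asymmetric norm on X. Then q is right bounded if and only if there exists a q^s-bounded set K ⊆ X (i.e. K ⊆ h·B_1^{q^s}[0] for some h > 0) such that B_1^q[0] ⊆ K + θ_q. -/
open Pointwise Set

/-- An asymmetric norm on a real vector space `X`. -/
structure IsAsymmetricNorm {X : Type*} [AddCommGroup X] [Module ℝ X] (q : X → ℝ) : Prop where
  nonneg : ∀ x, 0 ≤ q x
  smul_eq : ∀ a : ℝ, 0 ≤ a → ∀ x, q (a • x) = a * q x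
  add_le : ∀ x y, q (x + y) ≤ q x + q y
  eq_zero : ∀ x, q x = 0 → q (-x) = 0 → x = 0

/-- The topology `τ_q` generated by the open balls of `q`. -/
def asymTop {X : Type*} [AddCommGroup X] [Module ℝ X] (q : X → ℝ) : TopologicalSpace X :=
  TopologicalSpace.generateFrom {U | ∃ x : X, ∃ ε : ℝ, 0 < ε ∧ U = {y | q (y - x) < ε}}

/-- The symmetrization `q^s` of `q`. -/
def symNorm {X : Type*} [AddCommGroup X] (q : X → ℝ) (x : X) : ℝ := max (q x) (q (-x))

/-- The cone `θ_q = {x : q x = 0}`. -/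
def theta {X : Type*} [AddCommGroup X] (q : X → ℝ) : Set X := {x | q x = 0}

/-- The closed ball `B_r^q[x] = {y : q (y - x) ≤ r}`. -/
def closedBallA {X : Type*} [AddCommGroup X] (q : X → ℝ) (x : X) (r : ℝ) : Set X :=
  {y | q (y - x) ≤ r}

/-- A set `K` is strongly compact (w.r.t. the asymmetric norm `q`) if there is a set `S`,
compact in the topology of the norm `q^s`, with `S ⊆ K ⊆ S + θ_q`. -/
def StronglyCompact {X : Type*} [AddCommGroup X] [Module ℝ X] (q : X → ℝ) (K : Set X) : Prop :=
  ∃ S : Set X, @IsCompact X (asymTop (symNorm q)) S ∧ S ⊆ K ∧ K ⊆ S + theta q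

/-- `q` is right bounded if `r • B_1^q[0] ⊆ B_1^{q^s}[0] + θ_q` for some `r > 0`. -/
def RightBounded {X : Type*} [AddCommGroup X] [Module ℝ X] (q : X → ℝ) : Prop :=
  ∃ r : ℝ, 0 < r ∧ r • closedBallA q 0 1 ⊆ closedBallA (symNorm q) 0 1 + theta q

/-- `q` is 1-bounded if `B_1^q[0] ⊆ B_1^{q^s}[0] + θ_q`. -/
def OneBounded {X : Type*} [AddCommGroup X] [Module ℝ X] (q : X → ℝ) : Prop :=
  closedBallA q 0 1 ⊆ closedBallA (symNorm q) 0 1 + theta q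

/-- Two asymmetric norms are equivalent if `κ·q ≤ p ≤ l·q` for some `κ, l > 0`. -/
def EquivNorms {X : Type*} [AddCommGroup X] (p q : X → ℝ) : Prop :=
  ∃ κ l : ℝ, 0 < κ ∧ 0 < l ∧ ∀ x, κ * q x ≤ p x ∧ p x ≤ l * q x

/-- `X` is strongly locally compact (w.r.t. `τ_q`) if every point has a local base of
strongly compact sets. -/
def StronglyLocallyCompact {X : Type*} [AddCommGroup X] [Module ℝ X] (q : X → ℝ) : Prop :=
  ∀ x : X, ∀ U ∈ @nhds X (asymTop q) x,
    ∃ K : Set X, StronglyCompact q K ∧ K ∈ @nhds X (asymTop q) x ∧ K ⊆ U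

theorem statement1 {X : Type*} [AddCommGroup X] [Module ℝ X] (q : X → ℝ)
    (hq : IsAsymmetricNorm q) :
    RightBounded q ↔
      ∃ K : Set X, (∃ h : ℝ, 0 < h ∧ K ⊆ h • closedBallA (symNorm q) 0 1) ∧
        closedBallA q 0 1 ⊆ K + theta q := by
  constructor
  · rintro ⟨r, hr, hsub⟩
    refine ⟨(1/r) • closedBallA (symNorm q) 0 1, ⟨1/r, by positivity, subset_rfl⟩, ?_⟩
    intro x hx
    obtain ⟨s, hs, t, ht, hst⟩ := hsub (Set.smul_mem_smul_set hx)
    refine ⟨(1/r) • s, Set.smul_mem_smul_set hs, (1/r) • t, ?_, ?_⟩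
    · show q ((1/r) • t) = 0
      rw [hq.smul_eq (1/r) (by positivity) t, ht, mul_zero]
    · show (1/r) • s + (1/r) • t = x
      have hst' : s + t = r • x := hst
      rw [← smul_add, hst', smul_smul, one_div, inv_mul_cancel₀ hr.ne', one_smul]
  · rintro ⟨K, ⟨h, hh, hK⟩, hsub⟩
    refine ⟨1/h, by positivity, ?_⟩
    rintro _ ⟨x, hx, rfl⟩
    obtain ⟨k, hk, t, ht, hkt⟩ := hsub hx
    obtain ⟨s, hs, rfl⟩ := hK hk
    refine ⟨s, hs, (1/h) • t, ?_, ?_⟩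
    · show q ((1/h) • t) = 0
      rw [hq.smul_eq (1/h) (by positivity) t, ht, mul_zero]
    · have hkt' : h • s + t = x := hkt
      show s + (1/h) • t = (1/h) • x
      rw [← hkt', smul_add, smul_smul, one_div, inv_mul_cancel₀ hh.ne', one_smul]
end

section
/- Let X be a real vector space, p an asymmetric norm on X, and q_p(x) = inf { p^s(x − y) : y ∈ θ_p }. Then q_p^s = p^s, i.e. max(q_p(x), q_p(−x)) = max(p(x), p(−x)) for every x ∈ X. -/
open Pointwise Set

/-- Conradie's asymmetric norm `q_p(x) = inf { p^s(x - y) : y ∈ θ_p }`. -/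
noncomputable def conradieNorm {X : Type*} [AddCommGroup X] (p : X → ℝ) (x : X) : ℝ :=
  sInf {r : ℝ | ∃ y : X, p y = 0 ∧ r = symNorm p (x - y)}

theorem statement4 {X : Type*} [AddCommGroup X] [Module ℝ X] (p : X → ℝ)
    (hp : IsAsymmetricNorm p) :
    ∀ x : X, symNorm (conradieNorm p) x = symNorm p x := by
  have hp0 : p 0 = 0 := by
    have := hp.smul_eq 0 le_rfl 0
    simpa using this
  have hmem : ∀ x : X, symNorm p x ∈ {r : ℝ | ∃ y : X, p y = 0 ∧ r = symNorm p (x - y)} := by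
    intro x
    exact ⟨0, hp0, by simp⟩
  have hbdd : ∀ x : X, BddBelow {r : ℝ | ∃ y : X, p y = 0 ∧ r = symNorm p (x - y)} := by
    intro x
    refine ⟨0, ?_⟩
    rintro r ⟨y, hy, rfl⟩
    exact le_max_of_le_left (hp.nonneg _)
  have hle : ∀ x : X, conradieNorm p x ≤ symNorm p x := fun x =>
    csInf_le (hbdd x) (hmem x)
  have hge : ∀ x : X, p x ≤ conradieNorm p x := by
    intro x
    refine le_csInf ⟨_, hmem x⟩ ?_
    rintro r ⟨y, hy, rfl⟩
    have : p x ≤ p (x - y) + p y := by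
      have := hp.add_le (x - y) y
      simpa using this
    calc p x ≤ p (x - y) := by simpa [hy] using this
      _ ≤ symNorm p (x - y) := le_max_left _ _
  intro x
  apply le_antisymm
  · exact max_le (le_trans (hle x) le_rfl) (by
      calc conradieNorm p (-x) ≤ symNorm p (-x) := hle (-x)
        _ = symNorm p x := by simp [symNorm, max_comm])
  · exact max_le (le_trans (hge x) (le_max_left _ _))
      (le_trans (hge (-x)) (le_max_right _ _))
end

section
/- Let X be a finite-dimensional real vector space, q an asymmetric norm on X, and A ⊆ X a set which is compact in the topology τ_q. Then the convex hull conv(A) is also compact in τ_q. -/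
open Pointwise Set

/-! The convex hull of `A` is, by Carathéodory, the union over `n ≤ dim X + 1` of the images of
`Δₙ × Aⁿ` under `(w, z) ↦ ∑ wᵢ • zᵢ`. These sets are compact for `τ_q` because the map is
continuous there: `τ_q` makes addition continuous, and scalar multiplication is continuous as long
as the scalars stay nonnegative, which is all the standard simplex needs. -/

open Filter Topology Module

theorem convexHull_eq_biUnion_image_stdSimplex {𝕜 E : Type*} [Field 𝕜] [LinearOrder 𝕜]
    [IsStrictOrderedRing 𝕜] [AddCommGroup E] [Module 𝕜 E] [FiniteDimensional 𝕜 E] (s : Set E) :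
    convexHull 𝕜 s = ⋃ n ∈ Iic (finrank 𝕜 E + 1),
      (fun p : (Fin n → 𝕜) × (Fin n → E) => ∑ i, p.1 i • p.2 i) ''
        (stdSimplex 𝕜 (Fin n) ×ˢ univ.pi fun _ => s) := by
  refine Subset.antisymm (fun x hx => ?_) ?_
  · obtain ⟨ι, _, z, w, hzs, hai, hw₀, hw₁, rfl⟩ := eq_pos_convex_span_of_mem_convexHull hx
    have hcard : Fintype.card ι ≤ finrank 𝕜 E + 1 :=
      hai.card_le_finrank_succ.trans (Nat.succ_le_succ (Submodule.finrank_le _))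
    let e := (Fintype.equivFin ι).symm
    refine mem_biUnion hcard ⟨(w ∘ e, z ∘ e), ⟨⟨fun i => (hw₀ _).le, ?_⟩, ?_⟩, ?_⟩
    · simpa only [Function.comp_apply, e.sum_comp] using hw₁
    · exact fun i _ => hzs (mem_range_self _)
    · simp only [Function.comp_apply]
      exact e.sum_comp fun i => w i • z i
  · refine iUnion₂_subset fun n _ => ?_
    rintro _ ⟨⟨w, z⟩, ⟨hw, hz⟩, rfl⟩
    exact (convex_convexHull 𝕜 s).sum_mem (fun i _ => hw.1 i) hw.2
      fun i _ => subset_convexHull 𝕜 s (hz i (mem_univ i))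

section AsymmetricNorm

variable {X : Type*} [AddCommGroup X] [Module ℝ X] {q : X → ℝ}

namespace IsAsymmetricNorm

theorem map_zero (hq : IsAsymmetricNorm q) : q 0 = 0 := by
  simpa using hq.smul_eq 0 le_rfl 0

theorem sub_le_sub_add_sub (hq : IsAsymmetricNorm q) (x y z : X) :
    q (x - z) ≤ q (x - y) + q (y - z) := by
  simpa using hq.add_le (x - y) (y - z)

theorem smul_le_abs_mul_symNorm (hq : IsAsymmetricNorm q) (t : ℝ) (x : X) :
    q (t • x) ≤ |t| * symNorm q x := by
  rcases le_or_gt 0 t with ht | ht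
  · rw [hq.smul_eq t ht, abs_of_nonneg ht]
    exact mul_le_mul_of_nonneg_left (le_max_left _ _) ht
  · rw [← neg_smul_neg, hq.smul_eq (-t) (by linarith), abs_of_neg ht]
    exact mul_le_mul_of_nonneg_left (le_max_right _ _) (by linarith)

theorem smul_sub_smul_le (hq : IsAsymmetricNorm q) {t : ℝ} (ht : 0 ≤ t) (t₀ : ℝ) (x x₀ : X) :
    q (t • x - t₀ • x₀) ≤ t * q (x - x₀) + |t - t₀| * symNorm q x₀ := by
  have hsplit : t • x - t₀ • x₀ = t • (x - x₀) + (t - t₀) • x₀ := by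
    rw [smul_sub, sub_smul]; abel
  rw [hsplit, ← hq.smul_eq t ht]
  exact (hq.add_le _ _).trans (add_le_add le_rfl (hq.smul_le_abs_mul_symNorm _ _))

end IsAsymmetricNorm

variable [τ : TopologicalSpace X]

theorem tendsto_nhds_iff_of_eq_asymTop (hq : IsAsymmetricNorm q) (hτ : τ = asymTop q)
    {α : Type*} {f : α → X} {l : Filter α} {x : X} :
    Tendsto f l (𝓝 x) ↔ Tendsto (fun a => q (f a - x)) l (𝓝 0) := by
  constructor
  · intro hf
    refine tendsto_order.2 ⟨fun a ha => .of_forall fun _ => ha.trans_le (hq.nonneg _),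
      fun ε hε => hf (IsOpen.mem_nhds (s := {y | q (y - x) < ε}) ?_ ?_)⟩
    · exact hτ ▸ TopologicalSpace.isOpen_generateFrom_of_mem ⟨x, ε, hε, rfl⟩
    · simpa [hq.map_zero] using hε
  · intro hf
    rw [hτ]
    refine TopologicalSpace.tendsto_nhds_generateFrom_iff.2 ?_
    rintro _ ⟨c, ε, -, rfl⟩ (hx : q (x - c) < ε)
    filter_upwards [(tendsto_order.1 hf).2 _ (sub_pos.2 hx)] with a ha
    show q (f a - c) < ε
    linarith [hq.sub_le_sub_add_sub (f a) x c]

theorem continuousAdd_of_eq_asymTop (hq : IsAsymmetricNorm q) (hτ : τ = asymTop q) :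
    ContinuousAdd X := by
  refine ⟨continuous_iff_continuousAt.2 fun p => ?_⟩
  have hbound (y : X × X) : q (y.1 + y.2 - (p.1 + p.2)) ≤ q (y.1 - p.1) + q (y.2 - p.2) := by
    simpa [add_sub_add_comm] using hq.add_le (y.1 - p.1) (y.2 - p.2)
  refine (tendsto_nhds_iff_of_eq_asymTop hq hτ).2 (squeeze_zero (fun _ => hq.nonneg _) hbound ?_)
  simpa using ((tendsto_nhds_iff_of_eq_asymTop hq hτ).1 (continuous_fst.tendsto p)).add
    ((tendsto_nhds_iff_of_eq_asymTop hq hτ).1 (continuous_snd.tendsto p))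

theorem continuousOn_smul_of_eq_asymTop (hq : IsAsymmetricNorm q) (hτ : τ = asymTop q) :
    ContinuousOn (fun p : ℝ × X => p.1 • p.2) {p | 0 ≤ p.1} := by
  rintro ⟨t₀, x₀⟩ -
  have hfst : Tendsto Prod.fst (𝓝[{p : ℝ × X | 0 ≤ p.1}] (t₀, x₀)) (𝓝 t₀) :=
    (continuous_fst.tendsto _).mono_left nhdsWithin_le_nhds
  have hsnd : Tendsto (fun p : ℝ × X => q (p.2 - x₀)) (𝓝[{p | 0 ≤ p.1}] (t₀, x₀)) (𝓝 0) :=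
    (tendsto_nhds_iff_of_eq_asymTop hq hτ).1
      ((continuous_snd.tendsto _).mono_left nhdsWithin_le_nhds)
  have hmajorant : Tendsto (fun p : ℝ × X => p.1 * q (p.2 - x₀) + |p.1 - t₀| * symNorm q x₀)
      (𝓝[{p | 0 ≤ p.1}] (t₀, x₀)) (𝓝 0) := by
    simpa using (hfst.mul hsnd).add ((hfst.sub_const t₀).abs.mul_const (symNorm q x₀))
  refine (tendsto_nhds_iff_of_eq_asymTop hq hτ).2 <|
    squeeze_zero' (.of_forall fun _ => hq.nonneg _) ?_ hmajorant
  exact eventually_nhdsWithin_of_forall fun p hp => hq.smul_sub_smul_le hp t₀ p.2 x₀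

theorem continuousOn_sum_smul_of_eq_asymTop (hq : IsAsymmetricNorm q) (hτ : τ = asymTop q)
    (ι : Type*) [Fintype ι] :
    ContinuousOn (fun p : (ι → ℝ) × (ι → X) => ∑ i, p.1 i • p.2 i) {p | ∀ i, 0 ≤ p.1 i} := by
  have := continuousAdd_of_eq_asymTop hq hτ
  refine continuousOn_finsetSum (f := fun i (p : (ι → ℝ) × (ι → X)) => p.1 i • p.2 i) _
    fun i _ => ?_
  have hproj : Continuous fun p : (ι → ℝ) × (ι → X) => (p.1 i, p.2 i) := by fun_prop
  exact (continuousOn_smul_of_eq_asymTop hq hτ).comp hproj.continuousOn fun _ hp => hp i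

end AsymmetricNorm

theorem statement6 {X : Type*} [AddCommGroup X] [Module ℝ X] [FiniteDimensional ℝ X]
    (q : X → ℝ) (hq : IsAsymmetricNorm q) (A : Set X)
    (hA : @IsCompact X (asymTop q) A) :
    @IsCompact X (asymTop q) (convexHull ℝ A) := by
  let := asymTop q
  rw [convexHull_eq_biUnion_image_stdSimplex]
  refine (finite_Iic _).isCompact_biUnion fun n _ => ?_
  have hcompact := (isCompact_stdSimplex ℝ (Fin n)).prod (isCompact_univ_pi fun _ : Fin n => hA)
  exact hcompact.image_of_continuousOn
    ((continuousOn_sum_smul_of_eq_asymTop hq rfl (Fin n)).mono fun _ hp i => hp.1.1 i)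
end

section
/- Let X be a finite-dimensional real vector space, q an asymmetric norm on X, and A ⊆ X a strongly compact set. Then the closure of A in the norm topology of q^s is also strongly compact. -/
open Pointwise Set

/-- symNorm as an AddGroupNorm -/
noncomputable def symAGN {X : Type*} [AddCommGroup X] [Module ℝ X] (q : X → ℝ)
    (hq : IsAsymmetricNorm q) : AddGroupNorm X where
  toFun := symNorm q
  map_zero' := by
    have h0 : q 0 = 0 := by
      have := hq.smul_eq 0 le_rfl 0
      simpa using this
    simp [symNorm, h0]
  add_le' := fun x y => by
    have h1 := hq.add_le x y
    have h2 := hq.add_le (-x) (-y)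
    rw [show -x + -y = -(x+y) by abel] at h2
    simp only [symNorm]
    apply max_le
    · exact h1.trans (add_le_add (le_max_left _ _) (le_max_left _ _))
    · exact h2.trans (add_le_add (le_max_right _ _) (le_max_right _ _))
  neg' := fun x => by simp [symNorm, max_comm]
  eq_zero_of_map_eq_zero' := fun x h => by
    simp only [symNorm] at h
    exact hq.eq_zero x (le_antisymm (le_max_left _ _ |>.trans_eq h) (hq.nonneg x))
      (le_antisymm (le_max_right _ _ |>.trans_eq h) (hq.nonneg _))

theorem statement8 {X : Type*} [AddCommGroup X] [Module ℝ X] [FiniteDimensional ℝ X]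
    (q : X → ℝ) (hq : IsAsymmetricNorm q) (A : Set X)
    (hA : StronglyCompact q A) :
    StronglyCompact q (@closure X (asymTop (symNorm q)) A) := by
  obtain ⟨S, hScomp, hSA, hAS⟩ := hA
  letI : NormedAddCommGroup X := (symAGN q hq).toNormedAddCommGroup
  have hnorm : ∀ x : X, ‖x‖ = symNorm q x := fun x => rfl
  have htop : asymTop (symNorm q) = (inferInstance : TopologicalSpace X) := by
    apply le_antisymm
    · -- asymTop ≤ metric topology : every metric-open set is asymTop-open
      intro s hs
      rw [Metric.isOpen_iff] at hs
      choose ε hε hball using hs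
      have : s = ⋃ x : s, Metric.ball x.1 (ε x.1 x.2) := by
        apply Subset.antisymm
        · intro x hx
          exact mem_iUnion.2 ⟨⟨x, hx⟩, Metric.mem_ball_self (hε x hx)⟩
        · exact iUnion_subset fun x => hball x.1 x.2
      rw [this]
      refine @isOpen_iUnion X _ (asymTop (symNorm q)) _ ?_
      rintro ⟨x, hx⟩
      apply TopologicalSpace.GenerateOpen.basic
      exact ⟨x, ε x hx, hε x hx, by ext y; simp [Metric.mem_ball, dist_eq_norm, hnorm]⟩
    · apply le_generateFrom
      rintro s ⟨x, ε, hε, rfl⟩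
      have : {y : X | symNorm q (y - x) < ε} = Metric.ball x ε := by
        ext y; simp [Metric.mem_ball, dist_eq_norm, hnorm]
      rw [this]; exact Metric.isOpen_ball
  unfold StronglyCompact
  rw [htop] at hScomp ⊢
  have hqlip : LipschitzWith 1 q := by
    apply LipschitzWith.of_dist_le_mul
    intro x y
    simp only [NNReal.coe_one, one_mul, Real.dist_eq, dist_eq_norm]
    rw [Real.norm_eq_abs, abs_sub_le_iff]
    constructor
    · have h1 := hq.add_le (x - y) y
      rw [sub_add_cancel] at h1
      have h2 : q (x - y) ≤ ‖x - y‖ := by rw [hnorm]; exact le_max_left _ _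
      linarith
    · have := hq.add_le (y - x) x
      rw [sub_add_cancel] at this
      have h2 : q (y - x) ≤ ‖x - y‖ := by
        rw [hnorm]; rw [show y - x = -(x-y) by abel]
        exact le_max_right _ _
      linarith
  have hθ : IsClosed (theta q) := by
    have : theta q = q ⁻¹' {0} := rfl
    rw [this]
    exact IsClosed.preimage hqlip.continuous isClosed_singleton
  have hSθ : IsClosed (S + theta q) := hθ.add_left_of_isCompact hScomp
  refine ⟨S, hScomp, ?_, ?_⟩
  · exact hSA.trans subset_closure
  · exact (closure_minimal hAS hSθ)
end

section
/- Let X be a finite-dimensional real vector space and q an asymmetric norm on X. If the origin has a neighborhood U in the topology τ_q which is compact in τ_q, then there exists an asymmetric norm p on X equivalent to q such that every closed ball B_r^p[x] = {y ∈ X : p(y − x) ≤ r} (x ∈ X, r > 0) is compact in τ_q. If additionally U is strongly compact, then p can be chosen so that every closed ball B_r^p[x] is strongly compact. -/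
open Pointwise Set
open Topology

section Aux
variable {X : Type*} [AddCommGroup X] [Module ℝ X]

lemma IsAsymmetricNorm.zero {q : X → ℝ} (hq : IsAsymmetricNorm q) : q 0 = 0 := by
  have h := hq.smul_eq 0 le_rfl 0
  simpa using h

lemma asym_isOpen_ball (q : X → ℝ) (x : X) {ε : ℝ} (hε : 0 < ε) :
    IsOpen[asymTop q] {y | q (y - x) < ε} :=
  TopologicalSpace.isOpen_generateFrom_of_mem ⟨x, ε, hε, rfl⟩

lemma asym_ball_basis {q : X → ℝ} (hq : IsAsymmetricNorm q) :
    @TopologicalSpace.IsTopologicalBasis X (asymTop q)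
      {U | ∃ x : X, ∃ ε : ℝ, 0 < ε ∧ U = {y | q (y - x) < ε}} := by
  letI : TopologicalSpace X := asymTop q
  refine ⟨?_, ?_, rfl⟩
  · rintro t₁ ⟨x₁, ε₁, hε₁, rfl⟩ t₂ ⟨x₂, ε₂, hε₂, rfl⟩ y ⟨hy₁, hy₂⟩
    simp only [mem_setOf_eq] at hy₁ hy₂
    refine ⟨{z | q (z - y) < min (ε₁ - q (y - x₁)) (ε₂ - q (y - x₂))},
      ⟨y, _, lt_min (by linarith) (by linarith), rfl⟩, ?_, ?_⟩
    · simp only [mem_setOf_eq, sub_self, hq.zero]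
      exact lt_min (by linarith) (by linarith)
    · rintro z hz
      simp only [mem_setOf_eq] at hz
      have h₁ : q (z - x₁) ≤ q (z - y) + q (y - x₁) := by
        have := hq.add_le (z - y) (y - x₁); simpa [sub_add_sub_cancel] using this
      have h₂ : q (z - x₂) ≤ q (z - y) + q (y - x₂) := by
        have := hq.add_le (z - y) (y - x₂); simpa [sub_add_sub_cancel] using this
      have hm₁ := lt_of_lt_of_le hz (min_le_left _ _)
      have hm₂ := lt_of_lt_of_le hz (min_le_right _ _)
      exact ⟨by simp only [mem_setOf_eq]; linarith, by simp only [mem_setOf_eq]; linarith⟩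
  · refine eq_univ_of_forall fun y => ?_
    exact ⟨{z | q (z - y) < 1}, ⟨y, 1, one_pos, rfl⟩, by simp [hq.zero]⟩

lemma asym_mem_nhds {q : X → ℝ} (hq : IsAsymmetricNorm q) {x : X} {U : Set X}
    (h : U ∈ @nhds X (asymTop q) x) : ∃ ε > 0, {y | q (y - x) < ε} ⊆ U := by
  letI : TopologicalSpace X := asymTop q
  obtain ⟨s, ⟨x₀, ε, hε, rfl⟩, hxs, hsU⟩ := (asym_ball_basis hq).mem_nhds_iff.1 h
  simp only [mem_setOf_eq] at hxs
  refine ⟨ε - q (x - x₀), by linarith, fun y hy => hsU ?_⟩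
  simp only [mem_setOf_eq] at hy ⊢
  have := hq.add_le (y - x) (x - x₀)
  simp only [sub_add_sub_cancel] at this
  linarith

lemma asym_open_add_theta {q : X → ℝ} (hq : IsAsymmetricNorm q) {V : Set X}
    (hV : IsOpen[asymTop q] V) : ∀ y ∈ V, ∀ z ∈ theta q, y + z ∈ V := by
  have hV' : TopologicalSpace.GenerateOpen
      {U | ∃ x : X, ∃ ε : ℝ, 0 < ε ∧ U = {y | q (y - x) < ε}} V := hV
  clear hV
  induction hV' with
  | basic u hu =>
    obtain ⟨x, ε, hε, rfl⟩ := hu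
    intro y hy z hz
    simp only [mem_setOf_eq] at hy ⊢
    have h1 : q (y + z - x) ≤ q (y - x) + q z := by
      have := hq.add_le (y - x) z
      have he : y - x + z = y + z - x := by abel
      rwa [he] at this
    have hz0 : q z = 0 := hz
    linarith
  | univ => intro y _ z _; trivial
  | inter u v _ _ ihu ihv =>
    intro y hy z hz
    exact ⟨ihu y hy.1 z hz, ihv y hy.2 z hz⟩
  | sUnion S _ ih =>
    rintro y ⟨u, huS, hyu⟩ z hz
    exact ⟨u, huS, ih u huS y hyu z hz⟩

end Aux

theorem statement9 {X : Type*} [AddCommGroup X] [Module ℝ X] [FiniteDimensional ℝ X]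
    (q : X → ℝ) (hq : IsAsymmetricNorm q) (U : Set X)
    (hU : U ∈ @nhds X (asymTop q) 0) (hUc : @IsCompact X (asymTop q) U) :
    ∃ p : X → ℝ, IsAsymmetricNorm p ∧ EquivNorms p q ∧
      (∀ (x : X) (r : ℝ), 0 < r → @IsCompact X (asymTop q) (closedBallA p x r)) ∧
      (StronglyCompact q U →
        ∀ (x : X) (r : ℝ), 0 < r → StronglyCompact q (closedBallA p x r)) := by
  classical
  have hq0 : q 0 = 0 := hq.zero
  -- the norm structure coming from `q^s`
  letI : NormedAddCommGroup X := AddGroupNorm.toNormedAddCommGroup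
    { toFun := symNorm q
      map_zero' := by simp [symNorm, hq0]
      add_le' := fun x y => by
        have h1 : q (x + y) ≤ q x + q y := hq.add_le x y
        have h2 : q (-(x + y)) ≤ q (-x) + q (-y) := by
          have h := hq.add_le (-x) (-y)
          have e : -(x + y) = -x + -y := by abel
          rwa [e]
        simp only [symNorm]
        exact max_le
          (h1.trans (add_le_add (le_max_left _ _) (le_max_left _ _)))
          (h2.trans (add_le_add (le_max_right _ _) (le_max_right _ _)))
      neg' := fun x => by unfold symNorm; rw [neg_neg, max_comm]
      eq_zero_of_map_eq_zero' := fun x hx => by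
        have h1 : q x = 0 := le_antisymm ((le_max_left _ _).trans hx.le) (hq.nonneg x)
        have h2 : q (-x) = 0 := le_antisymm ((le_max_right _ _).trans hx.le) (hq.nonneg _)
        exact hq.eq_zero x h1 h2 }
  have hnorm : ∀ v : X, ‖v‖ = symNorm q v := fun _ => rfl
  have hsymNeg : ∀ v : X, symNorm q (-v) = symNorm q v := by
    intro v; unfold symNorm; rw [neg_neg, max_comm]
  have hsymSmul : ∀ b : ℝ, 0 ≤ b → ∀ v : X, symNorm q (b • v) = b * symNorm q v := by
    intro b hb v
    have e1 : q (b • v) = b * q v := hq.smul_eq b hb v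
    have e2 : q (-(b • v)) = b * q (-v) := by
      rw [← smul_neg]; exact hq.smul_eq b hb (-v)
    unfold symNorm
    rw [e1, e2, mul_max_of_nonneg _ _ hb]
  letI : NormedSpace ℝ X :=
    { norm_smul_le := fun a x => by
        rcases le_total 0 a with ha | ha
        · rw [hnorm, hnorm, hsymSmul a ha x, Real.norm_eq_abs, abs_of_nonneg ha]
        · have hax : a • x = (-a) • (-x) := by
            rw [neg_smul, smul_neg, neg_neg]
          rw [hnorm, hnorm, hax, hsymSmul (-a) (by linarith) (-x), hsymNeg,
            Real.norm_eq_abs, abs_of_nonpos ha] }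
  haveI : ProperSpace X := FiniteDimensional.proper_real X
  -- basic inequalities
  have hq_le_norm : ∀ v : X, q v ≤ ‖v‖ := fun v => le_max_left _ _
  have hq_cont : Continuous q := by
    have : LipschitzWith 1 q := by
      apply LipschitzWith.of_dist_le_mul
      intro a b
      rw [Real.dist_eq, NNReal.coe_one, one_mul, dist_eq_norm, abs_sub_le_iff]
      constructor
      · have h1 : q a ≤ q (a - b) + q b := by
          have := hq.add_le (a - b) b; simpa using this
        have h2 : q (a - b) ≤ ‖a - b‖ := hq_le_norm _
        linarith
      · have h1 : q b ≤ q (b - a) + q a := by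
          have := hq.add_le (b - a) a; simpa using this
        have h2 : q (b - a) ≤ ‖a - b‖ := by
          rw [norm_sub_rev]; exact hq_le_norm _
        linarith
    exact this.continuous
  -- facts about theta
  have hθ0 : (0 : X) ∈ theta q := hq0
  have hθne : (theta q).Nonempty := ⟨0, hθ0⟩
  have hθclosed : IsClosed (theta q) := by
    have : theta q = q ⁻¹' {0} := rfl
    rw [this]
    exact IsClosed.preimage hq_cont isClosed_singleton
  have hθadd : ∀ z₁ ∈ theta q, ∀ z₂ ∈ theta q, z₁ + z₂ ∈ theta q := by
    intro z₁ h₁ z₂ h₂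
    have h₁' : q z₁ = 0 := h₁
    have h₂' : q z₂ = 0 := h₂
    have := hq.add_le z₁ z₂
    have : q (z₁ + z₂) ≤ 0 := by linarith
    exact le_antisymm this (hq.nonneg _)
  have hθsmul : ∀ (a : ℝ), 0 ≤ a → ∀ z ∈ theta q, a • z ∈ theta q := by
    intro a ha z hz
    have hz' : q z = 0 := hz
    show q (a • z) = 0
    rw [hq.smul_eq a ha, hz', mul_zero]
  -- topology comparison
  have hball_eq : ∀ (x : X) (ε : ℝ), {y : X | symNorm q (y - x) < ε} = Metric.ball x ε := by
    intro x ε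
    ext y
    rw [Metric.mem_ball, dist_eq_norm]
    exact Iff.rfl
  have gensym : asymTop (symNorm q) = (inferInstance : TopologicalSpace X) := by
    apply le_antisymm
    · refine isOpen_implies_isOpen_iff.mp ?_
      intro s hs
      have hrep : s = ⋃₀ {b | (∃ x : X, ∃ ε : ℝ, 0 < ε ∧ b = {y | symNorm q (y - x) < ε}) ∧ b ⊆ s} := by
        apply subset_antisymm
        · intro y hy
          obtain ⟨δ, hδ, hsub⟩ := Metric.isOpen_iff.1 hs y hy
          refine ⟨{z | symNorm q (z - y) < δ}, ⟨⟨y, δ, hδ, rfl⟩, by rw [hball_eq]; exact hsub⟩, ?_⟩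
          simp only [mem_setOf_eq, sub_self]
          simpa [symNorm, hq0] using hδ
        · rintro y ⟨b, ⟨_, hbs⟩, hyb⟩
          exact hbs hyb
      rw [hrep]
      exact TopologicalSpace.GenerateOpen.sUnion _ fun u hu =>
        TopologicalSpace.GenerateOpen.basic u hu.1
    · refine le_generateFrom ?_
      rintro u ⟨x, ε, hε, rfl⟩
      rw [hball_eq]
      exact Metric.isOpen_ball
  have hcoarse : (inferInstance : TopologicalSpace X) ≤ asymTop q := by
    refine le_generateFrom ?_
    rintro u ⟨x, ε, hε, rfl⟩
    have : {y : X | q (y - x) < ε} = (fun y => q (y - x)) ⁻¹' Iio ε := rfl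
    rw [this]
    exact IsOpen.preimage (hq_cont.comp (continuous_id.sub continuous_const)) isOpen_Iio
  have htransfer : ∀ S : Set X, IsCompact S → @IsCompact X (asymTop q) S := by
    intro S hS
    have h := @IsCompact.image X X _ (asymTop q) S id hS (continuous_id_of_le hcoarse)
    simpa using h
  have hsymtransfer : ∀ S : Set X, IsCompact S → @IsCompact X (asymTop (symNorm q)) S := by
    intro S hS
    rw [gensym]
    exact hS
  -- a small ball inside U
  obtain ⟨ε, hε, hball⟩ := asym_mem_nhds hq hU
  have hballU : ∀ y : X, q y < ε → y ∈ U := by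
    intro y hy
    exact hball (by simpa using hy)
  -- finite cover of U by q-balls of radius ε/2
  have hcover := @IsCompact.elim_finite_subcover X (asymTop q) U X hUc
    (fun i : X => {y | q (y - i) < ε / 2})
    (fun i => asym_isOpen_ball q i (half_pos hε))
    (fun y _ => mem_iUnion.2 ⟨y, by simpa [hq0] using half_pos hε⟩)
  obtain ⟨t, ht⟩ := hcover
  set M : ℝ := ((t.sup fun i : X => ‖i‖₊ : NNReal) : ℝ) with hMdef
  have hM0 : 0 ≤ M := NNReal.coe_nonneg _
  have hMle : ∀ i ∈ t, ‖i‖ ≤ M := by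
    intro i hi
    have h := Finset.le_sup (f := fun i : X => ‖i‖₊) hi
    exact_mod_cast h
  have hdec : ∀ y : X, q y < ε → ∃ i ∈ t, q (y - i) < ε / 2 := by
    intro y hy
    have := ht (hballU y hy)
    simpa using this
  -- choice of centers
  choose ctr hmem hlt using fun y : {y : X // q y < ε} => hdec y.1 y.2
  have hnext : ∀ y : {y : X // q y < ε}, q ((2 : ℝ) • (y.1 - ctr y)) < ε := by
    intro y
    rw [hq.smul_eq 2 (by norm_num)]
    have := hlt y
    linarith
  -- the key right-boundedness estimate
  have key : ∀ x : X, q x < ε → ∃ a : X, ‖a‖ ≤ 2 * M ∧ q (x - a) = 0 := by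
    intro x hx
    let next : {y : X // q y < ε} → {y : X // q y < ε} := fun y =>
      ⟨(2 : ℝ) • (y.1 - ctr y), hnext y⟩
    let rem : ℕ → {y : X // q y < ε} := fun n =>
      Nat.rec (motive := fun _ => {y : X // q y < ε}) ⟨x, hx⟩ (fun _ p => next p) n
    let c : ℕ → X := fun k => ∑ i ∈ Finset.range k, ((1 : ℝ) / 2) ^ i • ctr (rem i)
    have hkey : ∀ k, x - c k = ((1 : ℝ) / 2) ^ k • (rem k).1 := by
      intro k
      induction k with
      | zero => simp [c, rem]
      | succ k ih =>
        have hrs : (rem (k + 1)).1 = (2 : ℝ) • ((rem k).1 - ctr (rem k)) := rfl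
        have hc : c (k + 1) = c k + ((1 : ℝ) / 2) ^ k • ctr (rem k) := by
          simp only [c]
          rw [Finset.sum_range_succ]
        have hpow : ((1 : ℝ) / 2) ^ (k + 1) * 2 = ((1 : ℝ) / 2) ^ k := by
          ring
        rw [hc, sub_add_eq_sub_sub, ih, hrs, smul_smul, hpow, smul_sub]
    have hq_ck : ∀ k, q (x - c k) ≤ ((1 : ℝ) / 2) ^ k * ε := by
      intro k
      rw [hkey k, hq.smul_eq _ (by positivity)]
      exact mul_le_mul_of_nonneg_left (rem k).2.le (by positivity)
    have hc_bound : ∀ k, ‖c k‖ ≤ 2 * M := by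
      intro k
      calc ‖c k‖ ≤ ∑ i ∈ Finset.range k, ‖((1 : ℝ) / 2) ^ i • ctr (rem i)‖ :=
            norm_sum_le _ _
        _ = ∑ i ∈ Finset.range k, ((1 : ℝ) / 2) ^ i * ‖ctr (rem i)‖ := by
            refine Finset.sum_congr rfl fun i _ => ?_
            rw [norm_smul, Real.norm_eq_abs, abs_of_nonneg (by positivity)]
        _ ≤ ∑ i ∈ Finset.range k, ((1 : ℝ) / 2) ^ i * M :=
            Finset.sum_le_sum fun i _ =>
              mul_le_mul_of_nonneg_left (hMle _ (hmem _)) (by positivity)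
        _ = (∑ i ∈ Finset.range k, ((1 : ℝ) / 2) ^ i) * M := by
            rw [Finset.sum_mul]
        _ ≤ 2 * M := mul_le_mul_of_nonneg_right (sum_geometric_two_le k) hM0
    obtain ⟨a, haS, φ, hφ, hφt⟩ := (isCompact_closedBall (0 : X) (2 * M)).tendsto_subseq
      (x := c) (fun k => by
        rw [Metric.mem_closedBall, dist_zero_right]
        exact hc_bound k)
    refine ⟨a, by rwa [Metric.mem_closedBall, dist_zero_right] at haS, ?_⟩
    have h1 : Filter.Tendsto (fun j => q (x - c (φ j))) Filter.atTop (nhds (q (x - a))) := by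
      have h0 : Filter.Tendsto (fun j => x - c (φ j)) Filter.atTop (nhds (x - a)) :=
        Filter.Tendsto.sub tendsto_const_nhds hφt
      exact (hq_cont.tendsto _).comp h0
    have h2 : Filter.Tendsto (fun j : ℕ => ((1 : ℝ) / 2) ^ j * ε) Filter.atTop (nhds 0) := by
      have := tendsto_pow_atTop_nhds_zero_of_lt_one
        (by norm_num : (0:ℝ) ≤ 1 / 2) (by norm_num : (1:ℝ) / 2 < 1)
      simpa using this.mul_const ε
    have hle : ∀ j : ℕ, q (x - c (φ j)) ≤ ((1 : ℝ) / 2) ^ j * ε := by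
      intro j
      refine (hq_ck (φ j)).trans ?_
      have hpow : ((1 : ℝ) / 2) ^ (φ j) ≤ ((1 : ℝ) / 2) ^ j :=
        pow_le_pow_of_le_one (by norm_num) (by norm_num) (hφ.le_apply)
      exact mul_le_mul_of_nonneg_right hpow hε.le
    have : q (x - a) ≤ 0 := le_of_tendsto_of_tendsto' h1 h2 hle
    exact le_antisymm this (hq.nonneg _)
  -- define p
  set p : X → ℝ := fun v => Metric.infDist v (theta q) with hpdef
  have hattain : ∀ v : X, ∃ z ∈ theta q, p v = dist v z := fun v =>
    hθclosed.exists_infDist_eq_dist hθne v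
  have hp_le : ∀ (v z : X), z ∈ theta q → p v ≤ ‖v - z‖ := by
    intro v z hz
    have := Metric.infDist_le_dist_of_mem (x := v) hz
    rwa [dist_eq_norm] at this
  have hp_nonneg : ∀ v, 0 ≤ p v := fun v => Metric.infDist_nonneg
  have hq_le_p : ∀ v, q v ≤ p v := by
    intro v
    obtain ⟨z, hz, hpz⟩ := hattain v
    have hz' : q z = 0 := hz
    have h1 : q v ≤ q (v - z) + q z := by
      have := hq.add_le (v - z) z; simpa using this
    have h2 : q (v - z) ≤ ‖v - z‖ := hq_le_norm _
    rw [hpz, dist_eq_norm]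
    linarith
  have hp_smul : ∀ (a : ℝ), 0 ≤ a → ∀ v, p (a • v) = a * p v := by
    intro a ha v
    rcases eq_or_lt_of_le ha with h0 | hpos
    · rw [← h0, zero_smul, zero_mul]
      exact Metric.infDist_zero_of_mem hθ0
    · apply le_antisymm
      · obtain ⟨z, hz, hpz⟩ := hattain v
        have := hp_le (a • v) (a • z) (hθsmul a ha z hz)
        rw [← smul_sub, norm_smul, Real.norm_eq_abs, abs_of_nonneg ha] at this
        rw [hpz, dist_eq_norm]
        exact this
      · obtain ⟨z, hz, hpz⟩ := hattain (a • v)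
        have hz' : a⁻¹ • z ∈ theta q := hθsmul _ (inv_nonneg.2 hpos.le) z hz
        have h1 : p v ≤ ‖v - a⁻¹ • z‖ := hp_le _ _ hz'
        have h2 : ‖a • (v - a⁻¹ • z)‖ = a * ‖v - a⁻¹ • z‖ := by
          rw [norm_smul, Real.norm_eq_abs, abs_of_nonneg ha]
        have h3 : a • (v - a⁻¹ • z) = a • v - z := by
          rw [smul_sub, smul_smul, mul_inv_cancel₀ hpos.ne', one_smul]
        calc a * p v ≤ a * ‖v - a⁻¹ • z‖ := mul_le_mul_of_nonneg_left h1 ha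
          _ = ‖a • (v - a⁻¹ • z)‖ := h2.symm
          _ = ‖a • v - z‖ := by rw [h3]
          _ = p (a • v) := by rw [hpz, dist_eq_norm]
  have hp_add : ∀ v w, p (v + w) ≤ p v + p w := by
    intro v w
    obtain ⟨z₁, hz₁, e₁⟩ := hattain v
    obtain ⟨z₂, hz₂, e₂⟩ := hattain w
    have hsum : v + w - (z₁ + z₂) = (v - z₁) + (w - z₂) := by abel
    calc p (v + w) ≤ ‖v + w - (z₁ + z₂)‖ := hp_le _ _ (hθadd _ hz₁ _ hz₂)
      _ ≤ ‖v - z₁‖ + ‖w - z₂‖ := by rw [hsum]; exact norm_add_le _ _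
      _ = p v + p w := by rw [e₁, e₂, dist_eq_norm, dist_eq_norm]
  have hp_defin : ∀ v, p v = 0 → q v = 0 := by
    intro v hv
    have hcl : v ∈ closure (theta q) := (Metric.mem_closure_iff_infDist_zero hθne).2 hv
    rwa [hθclosed.closure_eq] at hcl
  have hp_norm : IsAsymmetricNorm p :=
    ⟨hp_nonneg, hp_smul, hp_add,
      fun v h1 h2 => hq.eq_zero v (hp_defin v h1) (hp_defin (-v) h2)⟩
  -- p ≤ R q
  set R : ℝ := max (4 * M / ε) 1 with hRdef
  have hR0 : (0 : ℝ) < R := lt_of_lt_of_le one_pos (le_max_right _ _)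
  have hp_le_Rq : ∀ v, p v ≤ R * q v := by
    intro v
    rcases eq_or_lt_of_le (hq.nonneg v) with h0 | hpos
    · have hvθ : v ∈ theta q := h0.symm
      have : p v = 0 := Metric.infDist_zero_of_mem hvθ
      rw [this, ← h0, mul_zero]
    · set s : ℝ := ε / (2 * q v) with hsdef
      have hs0 : 0 < s := div_pos hε (by linarith)
      have hsv : q (s • v) < ε := by
        rw [hq.smul_eq s hs0.le]
        have hsq : s * q v = ε / 2 := by
          rw [hsdef]; field_simp
        rw [hsq]; linarith
      obtain ⟨a, haM, haθ⟩ := key (s • v) hsv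
      have hmemθ : s • v - a ∈ theta q := haθ
      have h1 : p (s • v) ≤ ‖a‖ := by
        have := hp_le (s • v) (s • v - a) hmemθ
        rwa [sub_sub_cancel] at this
      have h2 : s * p v ≤ 2 * M := by
        rw [← hp_smul s hs0.le v]
        exact h1.trans haM
      have h3 : p v ≤ (4 * M / ε) * q v := by
        rw [hsdef] at h2
        rw [div_mul_eq_mul_div, div_le_iff₀ (by positivity)] at h2
        rw [div_mul_eq_mul_div, le_div_iff₀ hε]
        nlinarith [hp_nonneg v]
      exact h3.trans (mul_le_mul_of_nonneg_right (le_max_left _ _) hpos.le)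
  have hEquiv : EquivNorms p q :=
    ⟨1, R, one_pos, hR0, fun v => ⟨by rw [one_mul]; exact hq_le_p v, hp_le_Rq v⟩⟩
  -- structure of closed p-balls
  have hp_cont : Continuous p := Metric.continuous_infDist_pt _
  have hSdef : ∀ (x : X) (r : ℝ), 0 < r → ∃ S : Set X,
      IsCompact S ∧ S ⊆ closedBallA p x r ∧ closedBallA p x r ⊆ S + theta q := by
    intro x r hr
    refine ⟨Metric.closedBall x r ∩ closedBallA p x r, ?_, inter_subset_right, ?_⟩
    · refine IsCompact.of_isClosed_subset (isCompact_closedBall x r) ?_ inter_subset_left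
      refine IsClosed.inter Metric.isClosed_closedBall ?_
      have : closedBallA p x r = (fun y => p (y - x)) ⁻¹' Iic r := rfl
      rw [this]
      exact IsClosed.preimage (hp_cont.comp (continuous_id.sub continuous_const)) isClosed_Iic
    · intro y hy
      have hy' : p (y - x) ≤ r := hy
      obtain ⟨z, hz, he⟩ := hattain (y - x)
      have hnorm_le : ‖y - z - x‖ ≤ r := by
        have : y - z - x = y - x - z := by abel
        rw [this, ← dist_eq_norm, ← he]
        exact hy'
      rw [Set.mem_add]
      refine ⟨y - z, ⟨?_, ?_⟩, z, hz, by abel⟩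
      · rw [Metric.mem_closedBall, dist_eq_norm]
        exact hnorm_le
      · show p (y - z - x) ≤ r
        have := hp_le (y - z - x) 0 hθ0
        rw [sub_zero] at this
        exact this.trans hnorm_le
  have hstrong : ∀ (x : X) (r : ℝ), 0 < r → StronglyCompact q (closedBallA p x r) := by
    intro x r hr
    obtain ⟨S, hSc, hS1, hS2⟩ := hSdef x r hr
    exact ⟨S, hsymtransfer S hSc, hS1, hS2⟩
  have hcomp : ∀ (x : X) (r : ℝ), 0 < r → @IsCompact X (asymTop q) (closedBallA p x r) := by
    intro x r hr
    obtain ⟨S, hSc, hS1, hS2⟩ := hSdef x r hr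
    apply @isCompact_of_finite_subcover X (asymTop q) (closedBallA p x r)
    intro ι Uo hUo hcov
    obtain ⟨ft, hft⟩ := @IsCompact.elim_finite_subcover X (asymTop q) S ι (htransfer S hSc) Uo hUo (hS1.trans hcov)
    refine ⟨ft, ?_⟩
    intro y hy
    have hy2 := hS2 hy
    rw [Set.mem_add] at hy2
    obtain ⟨w, hwS, z, hz, hwz⟩ := hy2
    have hw := hft hwS
    rw [mem_iUnion₂] at hw ⊢
    obtain ⟨i, hi, hwi⟩ := hw
    refine ⟨i, hi, ?_⟩
    rw [← hwz]
    exact asym_open_add_theta hq (hUo i) w hwi z hz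
  exact ⟨p, hp_norm, hEquiv, hcomp, fun _ => hstrong⟩
end

section
/- There exists an asymmetric norm q on ℝ² such that q is right bounded but the closed unit ball B_1^q[0] = {y ∈ ℝ² : q(y) ≤ 1} is not compact in the topology τ_q. -/
open Pointwise Set

noncomputable def qq : (Fin 2 → ℝ) → ℝ :=
  fun v => max 0 (v 0 + v 1 + Real.sqrt ((v 0)^2 + (v 1)^2))

lemma abs_le_sqrt0 (v : Fin 2 → ℝ) : |v 0| ≤ Real.sqrt ((v 0)^2 + (v 1)^2) := by
  rw [← Real.sqrt_sq_eq_abs]; exact Real.sqrt_le_sqrt (by nlinarith [sq_nonneg (v 1)])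

lemma abs_le_sqrt1 (v : Fin 2 → ℝ) : |v 1| ≤ Real.sqrt ((v 0)^2 + (v 1)^2) := by
  rw [← Real.sqrt_sq_eq_abs]; exact Real.sqrt_le_sqrt (by nlinarith [sq_nonneg (v 0)])

lemma fst_le_qq (v : Fin 2 → ℝ) : v 0 ≤ qq v := by
  rcases le_or_gt (v 0) 0 with h | h
  · exact h.trans (le_max_left _ _)
  · refine le_trans ?_ (le_max_right _ _)
    have := abs_le_sqrt1 v
    have := neg_abs_le (v 1)
    linarith

lemma snd_le_qq (v : Fin 2 → ℝ) : v 1 ≤ qq v := by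
  rcases le_or_gt (v 1) 0 with h | h
  · exact h.trans (le_max_left _ _)
  · refine le_trans ?_ (le_max_right _ _)
    have := abs_le_sqrt0 v
    have := neg_abs_le (v 0)
    linarith

lemma qq_eq_zero_of_nonpos {v : Fin 2 → ℝ} (h0 : v 0 ≤ 0) (h1 : v 1 ≤ 0) : qq v = 0 := by
  have hs : Real.sqrt ((v 0)^2 + (v 1)^2) ≤ -(v 0) - v 1 := by
    have h2 : (v 0)^2 + (v 1)^2 ≤ (-(v 0) - v 1)^2 := by nlinarith
    calc Real.sqrt ((v 0)^2 + (v 1)^2) ≤ Real.sqrt ((-(v 0) - v 1)^2) := Real.sqrt_le_sqrt h2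
    _ = -(v 0) - v 1 := Real.sqrt_sq (by linarith)
  exact max_eq_left (by linarith)

lemma minkowski (x y : Fin 2 → ℝ) :
    Real.sqrt ((x 0 + y 0)^2 + (x 1 + y 1)^2)
      ≤ Real.sqrt ((x 0)^2 + (x 1)^2) + Real.sqrt ((y 0)^2 + (y 1)^2) := by
  set A := (x 0)^2 + (x 1)^2 with hA
  set B := (y 0)^2 + (y 1)^2 with hB
  have hA0 : (0:ℝ) ≤ A := by positivity
  have hB0 : (0:ℝ) ≤ B := by positivity
  have hsA : (Real.sqrt A)^2 = A := Real.sq_sqrt hA0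
  have hsB : (Real.sqrt B)^2 = B := Real.sq_sqrt hB0
  have hmul : Real.sqrt A * Real.sqrt B = Real.sqrt (A * B) := (Real.sqrt_mul hA0 B).symm
  have hcs : x 0 * y 0 + x 1 * y 1 ≤ Real.sqrt (A * B) := by
    calc x 0 * y 0 + x 1 * y 1 ≤ |x 0 * y 0 + x 1 * y 1| := le_abs_self _
    _ = Real.sqrt ((x 0 * y 0 + x 1 * y 1)^2) := (Real.sqrt_sq_eq_abs _).symm
    _ ≤ Real.sqrt (A * B) := Real.sqrt_le_sqrt (by nlinarith [sq_nonneg (x 0 * y 1 - x 1 * y 0)])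
  have hS : 0 ≤ Real.sqrt A + Real.sqrt B := by positivity
  calc Real.sqrt ((x 0 + y 0)^2 + (x 1 + y 1)^2)
      ≤ Real.sqrt ((Real.sqrt A + Real.sqrt B)^2) := by
        apply Real.sqrt_le_sqrt
        have : (Real.sqrt A + Real.sqrt B)^2 = A + B + 2 * Real.sqrt (A * B) := by
          rw [add_sq, hsA, hsB]; rw [← hmul]; ring
        rw [this, hA, hB]; nlinarith
  _ = Real.sqrt A + Real.sqrt B := Real.sqrt_sq hS

lemma qq_asym : IsAsymmetricNorm qq := by
  constructor
  · intro x; exact le_max_left _ _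
  · intro a ha x
    have h1 : (a • x) 0 = a * x 0 := rfl
    have h2 : (a • x) 1 = a * x 1 := rfl
    unfold qq
    rw [h1, h2]
    have : (a * x 0)^2 + (a * x 1)^2 = a^2 * ((x 0)^2 + (x 1)^2) := by ring
    rw [this, Real.sqrt_mul (sq_nonneg a), Real.sqrt_sq ha]
    rw [show a * x 0 + a * x 1 + a * Real.sqrt ((x 0)^2 + (x 1)^2)
        = a * (x 0 + x 1 + Real.sqrt ((x 0)^2 + (x 1)^2)) by ring]
    rw [mul_max_of_nonneg _ _ ha, mul_zero]
  · intro x y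
    have h1 : (x + y) 0 = x 0 + y 0 := rfl
    have h2 : (x + y) 1 = x 1 + y 1 := rfl
    unfold qq
    rw [h1, h2]
    apply max_le
    · positivity
    · have := minkowski x y
      have hx := le_max_right (0:ℝ) (x 0 + x 1 + Real.sqrt ((x 0)^2 + (x 1)^2))
      have hy := le_max_right (0:ℝ) (y 0 + y 1 + Real.sqrt ((y 0)^2 + (y 1)^2))
      linarith
  · intro x hx hnx
    have h1 : (-x) 0 = -(x 0) := rfl
    have h2 : (-x) 1 = -(x 1) := rfl
    unfold qq at hx hnx
    rw [h1, h2] at hnx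
    have e : (-(x 0))^2 + (-(x 1))^2 = (x 0)^2 + (x 1)^2 := by ring
    rw [e] at hnx
    have hx' : x 0 + x 1 + Real.sqrt ((x 0)^2 + (x 1)^2) ≤ 0 := by
      have := le_max_right (0:ℝ) (x 0 + x 1 + Real.sqrt ((x 0)^2 + (x 1)^2))
      linarith [this.trans_eq hx]
    have hnx' : -(x 0) + -(x 1) + Real.sqrt ((x 0)^2 + (x 1)^2) ≤ 0 := by
      have := le_max_right (0:ℝ) (-(x 0) + -(x 1) + Real.sqrt ((x 0)^2 + (x 1)^2))
      linarith [this.trans_eq hnx]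
    have hs0 : Real.sqrt ((x 0)^2 + (x 1)^2) ≤ 0 := by linarith
    have hsq : (x 0)^2 + (x 1)^2 = 0 := by
      have hz : Real.sqrt ((x 0)^2 + (x 1)^2) = 0 := le_antisymm hs0 (Real.sqrt_nonneg _)
      have := Real.sq_sqrt (show (0:ℝ) ≤ (x 0)^2 + (x 1)^2 by positivity)
      rw [hz] at this
      simpa using this.symm
    have h0 : x 0 = 0 := by nlinarith [sq_nonneg (x 0), sq_nonneg (x 1)]
    have h1' : x 1 = 0 := by nlinarith [sq_nonneg (x 0), sq_nonneg (x 1)]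
    funext i
    fin_cases i <;> simpa [h0, h1']

lemma qq_rb : RightBounded qq := by
  refine ⟨1/4, by norm_num, ?_⟩
  intro w hw
  rcases Set.mem_smul_set.mp hw with ⟨z, hz, rfl⟩
  have hz' : qq z ≤ 1 := by simpa [closedBallA] using hz
  have hz0 : z 0 ≤ 1 := (fst_le_qq z).trans hz'
  have hz1 : z 1 ≤ 1 := (snd_le_qq z).trans hz'
  set s : Fin 2 → ℝ := fun _ => 1/4 with hs
  have h1 : s ∈ closedBallA (symNorm qq) 0 1 := by
    show symNorm qq (s - 0) ≤ 1
    rw [sub_zero]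
    apply max_le
    · show qq s ≤ 1
      apply max_le
      · norm_num
      · have : Real.sqrt ((s 0)^2 + (s 1)^2) ≤ 1/2 := by
          calc Real.sqrt ((s 0)^2 + (s 1)^2) ≤ Real.sqrt ((1/2:ℝ)^2) := by
                apply Real.sqrt_le_sqrt; norm_num [hs]
          _ = 1/2 := Real.sqrt_sq (by norm_num)
        have h' : Real.sqrt ((1/4:ℝ)^2 + (1/4:ℝ)^2) ≤ 1/2 := this
        show (1/4:ℝ) + 1/4 + Real.sqrt ((1/4:ℝ)^2 + (1/4:ℝ)^2) ≤ 1
        linarith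
    · show qq (-s) ≤ 1
      rw [qq_eq_zero_of_nonpos (by norm_num [hs]) (by norm_num [hs])]
      norm_num
  have h2 : (1/4:ℝ) • z - s ∈ theta qq := by
    show qq ((1/4:ℝ) • z - s) = 0
    apply qq_eq_zero_of_nonpos
    · show (1/4:ℝ) * z 0 - 1/4 ≤ 0
      linarith
    · show (1/4:ℝ) * z 1 - 1/4 ≤ 0
      linarith
  have key : (1/4:ℝ) • z = s + ((1/4:ℝ) • z - s) := by abel
  rw [key]
  exact Set.add_mem_add h1 h2

lemma qq_not_compact :
    ¬ @IsCompact (Fin 2 → ℝ) (asymTop qq) (closedBallA qq 0 1) := by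
  intro hC
  letI : TopologicalSpace (Fin 2 → ℝ) := asymTop qq
  set p : ℕ → (Fin 2 → ℝ) := fun n i => if i = 0 then -(n:ℝ) else 1 - 1/((n:ℝ)+1) with hp
  have hp0 : ∀ n, p n 0 = -(n:ℝ) := fun n => by simp [hp]
  have hp1 : ∀ n, p n 1 = 1 - 1/((n:ℝ)+1) := fun n => by norm_num [hp]
  have hmem : ∀ n, p n ∈ closedBallA qq 0 1 := by
    intro n
    show qq (p n - 0) ≤ 1
    rw [sub_zero]
    apply max_le
    · norm_num
    · rw [hp0, hp1]
      have hn1 : (0:ℝ) < (n:ℝ) + 1 := by positivity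
      set c : ℝ := 1/((n:ℝ)+1) with hc
      have hcpos : 0 < c := by positivity
      have hcn : c * ((n:ℝ)+1) = 1 := by rw [hc]; exact one_div_mul_cancel hn1.ne'
      have hsq : Real.sqrt ((-(n:ℝ))^2 + (1-c)^2) ≤ (n:ℝ) + c := by
        calc Real.sqrt ((-(n:ℝ))^2 + (1-c)^2) ≤ Real.sqrt (((n:ℝ) + c)^2) := by
              apply Real.sqrt_le_sqrt; nlinarith
        _ = (n:ℝ) + c := Real.sqrt_sq (by positivity)
      linarith
  haveI hne : (Filter.map p (Filter.atTop : Filter ℕ)).NeBot := Filter.map_neBot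
  obtain ⟨x, hxB, hcl⟩ := hC (f := Filter.map p Filter.atTop) (Filter.le_principal_iff.mpr
    (Filter.mem_map.mpr (Filter.Eventually.of_forall hmem)))
  have hx' : qq x ≤ 1 := by simpa [closedBallA] using hxB
  have hb : x 1 < 1 := by
    by_contra hb
    push_neg at hb
    have habs : |x 0| < Real.sqrt ((x 0)^2 + (x 1)^2) := by
      rw [← Real.sqrt_sq_eq_abs]
      apply Real.sqrt_lt_sqrt (sq_nonneg _)
      nlinarith
    have : (1:ℝ) < x 0 + x 1 + Real.sqrt ((x 0)^2 + (x 1)^2) := by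
      have := neg_abs_le (x 0)
      linarith
    have := le_max_right (0:ℝ) (x 0 + x 1 + Real.sqrt ((x 0)^2 + (x 1)^2))
    have : (1:ℝ) < qq x := by unfold qq; linarith
    linarith
  set δ : ℝ := (1 - x 1)/2 with hδdef
  have hδ : 0 < δ := by rw [hδdef]; linarith
  have hVopen : IsOpen {z : Fin 2 → ℝ | qq (z - x) < δ} := by
    apply TopologicalSpace.isOpen_generateFrom_of_mem
    exact ⟨x, δ, hδ, rfl⟩
  have hVnhds : {z : Fin 2 → ℝ | qq (z - x) < δ} ∈ nhds x := by
    apply hVopen.mem_nhds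
    show qq (x - x) < δ
    rw [sub_self]
    have : qq 0 = 0 := qq_eq_zero_of_nonpos le_rfl le_rfl
    rw [this]; exact hδ
  obtain ⟨N, hN⟩ := exists_nat_ge (1/δ)
  have hS : {z : Fin 2 → ℝ | δ ≤ qq (z - x)} ∈ Filter.map p Filter.atTop := by
    rw [Filter.mem_map]
    apply Filter.eventually_atTop.mpr ⟨N, fun n hn => ?_⟩
    show δ ≤ qq (p n - x)
    have hle := snd_le_qq (p n - x)
    have hsub : (p n - x) 1 = p n 1 - x 1 := rfl
    rw [hsub, hp1] at hle
    have hn1 : (0:ℝ) < (n:ℝ) + 1 := by positivity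
    have hnN : (1:ℝ)/δ ≤ (n:ℝ) + 1 := by
      have : (N:ℝ) ≤ (n:ℝ) := Nat.cast_le.mpr hn
      linarith
    have hfrac : 1/((n:ℝ)+1) ≤ δ := by
      rw [div_le_iff₀ hn1]
      have := (div_le_iff₀ hδ).mp hnN
      nlinarith
    have : δ ≤ 1 - 1/((n:ℝ)+1) - x 1 := by
      have h2δ : 1 - x 1 = 2*δ := by rw [hδdef]; ring
      linarith
    linarith
  haveI : (nhds x ⊓ Filter.map p Filter.atTop).NeBot := hcl
  obtain ⟨z, hzV, hzS⟩ := Filter.nonempty_of_mem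
    (Filter.inter_mem (Filter.mem_inf_of_left hVnhds) (Filter.mem_inf_of_right hS))
  exact absurd (show δ ≤ qq (z - x) from hzS) (not_le.mpr hzV)

theorem statement10 :
    ∃ q : (Fin 2 → ℝ) → ℝ, IsAsymmetricNorm q ∧ RightBounded q ∧
      ¬ @IsCompact (Fin 2 → ℝ) (asymTop q) (closedBallA q 0 1) := by
  exact ⟨qq, qq_asym, qq_rb, qq_not_compact⟩
end

section
/- Let X be a finite-dimensional real vector space and p an asymmetric norm on X. Then p is right bounded if and only if there exists an asymmetric norm q on X which is equivalent to p and 1-bounded. -/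
open Pointwise Set

section Helpers

variable {X : Type*} [AddCommGroup X] [Module ℝ X] {p : X → ℝ}

theorem IsAsymmetricNorm.map_zero' (hp : IsAsymmetricNorm p) : p 0 = 0 := by
  have h := hp.smul_eq 0 le_rfl 0
  simpa using h

theorem sym_nonneg (hp : IsAsymmetricNorm p) (x : X) : 0 ≤ symNorm p x :=
  le_trans (hp.nonneg x) (le_max_left _ _)

theorem sym_zero (hp : IsAsymmetricNorm p) : symNorm p 0 = 0 := by
  simp [symNorm, hp.map_zero']

theorem sym_neg (p : X → ℝ) (x : X) : symNorm p (-x) = symNorm p x := by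
  simp [symNorm, max_comm]

theorem le_sym (p : X → ℝ) (x : X) : p x ≤ symNorm p x := le_max_left _ _

theorem sym_add_le (hp : IsAsymmetricNorm p) (x y : X) :
    symNorm p (x + y) ≤ symNorm p x + symNorm p y := by
  refine max_le ?_ ?_
  · exact le_trans (hp.add_le x y) (add_le_add (le_max_left _ _) (le_max_left _ _))
  · rw [neg_add]
    exact le_trans (hp.add_le (-x) (-y)) (add_le_add (le_max_right _ _) (le_max_right _ _))

theorem mul_max_aux (a b c : ℝ) (ha : 0 ≤ a) : max (a * b) (a * c) = a * max b c := by
  rcases le_total b c with h | h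
  · rw [max_eq_right h, max_eq_right (mul_le_mul_of_nonneg_left h ha)]
  · rw [max_eq_left h, max_eq_left (mul_le_mul_of_nonneg_left h ha)]

theorem sym_smul (hp : IsAsymmetricNorm p) (a : ℝ) (x : X) :
    symNorm p (a • x) = |a| * symNorm p x := by
  rcases le_or_gt 0 a with ha | ha
  · rw [abs_of_nonneg ha]
    unfold symNorm
    rw [← smul_neg, hp.smul_eq a ha, hp.smul_eq a ha]
    exact mul_max_aux a _ _ ha
  · have h0 : (0:ℝ) ≤ -a := by linarith
    rw [abs_of_neg ha]
    have hx : a • x = (-a) • (-x) := by rw [neg_smul, smul_neg, neg_neg]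
    rw [hx]
    unfold symNorm
    rw [← smul_neg, hp.smul_eq _ h0, hp.smul_eq _ h0, neg_neg, max_comm]
    exact mul_max_aux _ _ _ h0

theorem sym_eq_zero (hp : IsAsymmetricNorm p) {x : X} (h : symNorm p x = 0) : x = 0 := by
  have h1 : p x = 0 :=
    le_antisymm (h ▸ le_max_left _ _) (hp.nonneg x)
  have h2 : p (-x) = 0 :=
    le_antisymm (h ▸ le_max_right _ _) (hp.nonneg _)
  exact hp.eq_zero x h1 h2

/-- The candidate 1-bounded norm: `mu p x = inf {‖u‖_{p^s} : x - u ∈ θ_p}`. -/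
noncomputable def muN (p : X → ℝ) (x : X) : ℝ :=
  sInf {c : ℝ | ∃ u : X, symNorm p u = c ∧ p (x - u) = 0}

theorem muSet_bdd (hp : IsAsymmetricNorm p) (x : X) :
    BddBelow {c : ℝ | ∃ u : X, symNorm p u = c ∧ p (x - u) = 0} :=
  ⟨0, fun c hc => by obtain ⟨u, hu, -⟩ := hc; exact hu ▸ sym_nonneg hp u⟩

theorem muSet_nonempty (hp : IsAsymmetricNorm p) (x : X) :
    {c : ℝ | ∃ u : X, symNorm p u = c ∧ p (x - u) = 0}.Nonempty :=
  ⟨symNorm p x, x, rfl, by simp [hp.map_zero']⟩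

theorem muN_le (hp : IsAsymmetricNorm p) {x u : X} (h : p (x - u) = 0) :
    muN p x ≤ symNorm p u :=
  csInf_le (muSet_bdd hp x) ⟨u, rfl, h⟩

theorem muN_nonneg (hp : IsAsymmetricNorm p) (x : X) : 0 ≤ muN p x :=
  le_csInf (muSet_nonempty hp x) fun c hc => by
    obtain ⟨u, hu, -⟩ := hc; exact hu ▸ sym_nonneg hp u

theorem p_le_muN (hp : IsAsymmetricNorm p) (x : X) : p x ≤ muN p x := by
  refine le_csInf (muSet_nonempty hp x) fun c hc => ?_
  obtain ⟨u, hu, h0⟩ := hc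
  have h1 : p x ≤ p (x - u) + p u := by
    have := hp.add_le (x - u) u
    simpa using this
  rw [h0, zero_add] at h1
  exact h1.trans (hu ▸ le_sym p u)

theorem muN_zero (hp : IsAsymmetricNorm p) : muN p 0 = 0 := by
  refine le_antisymm ?_ (muN_nonneg hp 0)
  have := muN_le hp (u := 0) (x := (0:X)) (by simp [hp.map_zero'])
  simpa [sym_zero hp] using this

/-- In finite dimensions, the infimum defining `muN` is attained. -/
theorem muN_exists_min [FiniteDimensional ℝ X] (hp : IsAsymmetricNorm p) (x : X) :
    ∃ u : X, p (x - u) = 0 ∧ symNorm p u = muN p x := by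
  letI : NormedAddCommGroup X :=
    AddGroupNorm.toNormedAddCommGroup
      { toFun := symNorm p
        map_zero' := sym_zero hp
        add_le' := sym_add_le hp
        neg' := sym_neg p
        eq_zero_of_map_eq_zero' := fun x h => sym_eq_zero hp h }
  letI : NormedSpace ℝ X :=
    { ‹Module ℝ X› with norm_smul_le := fun a y => le_of_eq (by
      show symNorm p (a • y) = ‖a‖ * symNorm p y
      rw [Real.norm_eq_abs]; exact sym_smul hp a y) }
  have hnorm : ∀ y : X, ‖y‖ = symNorm p y := fun _ => rfl
  have hlip : LipschitzWith 1 p := by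
    refine LipschitzWith.of_dist_le_mul fun a b => ?_
    rw [NNReal.coe_one, one_mul, Real.dist_eq, dist_eq_norm, hnorm]
    have h1 : p a - p b ≤ symNorm p (a - b) := by
      have := hp.add_le (a - b) b
      simp only [sub_add_cancel] at this
      have := le_sym p (a - b)
      linarith [hp.add_le (a - b) b, le_sym p (a - b)]
    have h2 : p b - p a ≤ symNorm p (a - b) := by
      have hadd := hp.add_le (b - a) a
      simp only [sub_add_cancel] at hadd
      have hle : p (b - a) ≤ symNorm p (a - b) := by
        calc p (b - a) ≤ symNorm p (b - a) := le_sym p (b - a)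
          _ = symNorm p (a - b) := by rw [← neg_sub a b, sym_neg]
      linarith
    exact abs_le.mpr ⟨by linarith, h1⟩
  haveI : ProperSpace X := @FiniteDimensional.proper_real X _ _ (by with_unfolding_all exact ‹FiniteDimensional ℝ X›)
  have hcont : Continuous fun u : X => p (x - u) :=
    hlip.continuous.comp (continuous_const.sub continuous_id)
  have hCclosed : IsClosed {u : X | p (x - u) = 0} :=
    isClosed_eq hcont continuous_const
  set K := {u : X | p (x - u) = 0} ∩ Metric.closedBall 0 ‖x‖ with hK
  have hKcomp : IsCompact K := (isCompact_closedBall _ _).inter_left hCclosed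
  have hxK : x ∈ K := by
    constructor
    · show p (x - x) = 0
      simp [hp.map_zero']
    · simp [Metric.mem_closedBall]
  obtain ⟨u₀, hu₀K, hmin⟩ := hKcomp.exists_isMinOn ⟨x, hxK⟩ (continuous_norm.continuousOn)
  refine ⟨u₀, hu₀K.1, le_antisymm ?_ (muN_le hp hu₀K.1)⟩
  refine le_csInf (muSet_nonempty hp x) fun c hc => ?_
  obtain ⟨u, hu, h0⟩ := hc
  rcases le_or_gt (symNorm p u) ‖x‖ with hle | hlt
  · have huK : u ∈ K := ⟨h0, by simpa [Metric.mem_closedBall, hnorm] using hle⟩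
    have := hmin huK
    simpa [hnorm, hu] using this
  · have h1 : ‖u₀‖ ≤ ‖x‖ := by simpa using hmin hxK
    rw [hnorm] at h1
    exact hu ▸ le_trans h1 hlt.le

theorem muN_smul [FiniteDimensional ℝ X] (hp : IsAsymmetricNorm p) (a : ℝ) (ha : 0 ≤ a)
    (x : X) : muN p (a • x) = a * muN p x := by
  have key : ∀ b : ℝ, 0 ≤ b → ∀ y : X, muN p (b • y) ≤ b * muN p y := by
    intro b hb y
    obtain ⟨u, hu, hmu⟩ := muN_exists_min hp y
    have h0 : p (b • y - b • u) = 0 := by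
      rw [← smul_sub, hp.smul_eq b hb, hu, mul_zero]
    have := muN_le hp h0
    rwa [sym_smul hp, abs_of_nonneg hb, hmu] at this
  rcases eq_or_lt_of_le ha with rfl | ha'
  · simp [muN_zero hp]
  refine le_antisymm (key a ha x) ?_
  have h := key a⁻¹ (by positivity) (a • x)
  rw [inv_smul_smul₀ (ne_of_gt ha') x] at h
  have := mul_le_mul_of_nonneg_left h ha
  rwa [← mul_assoc, mul_inv_cancel₀ (ne_of_gt ha'), one_mul] at this

theorem muN_isAsym [FiniteDimensional ℝ X] (hp : IsAsymmetricNorm p) :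
    IsAsymmetricNorm (muN p) := by
  refine ⟨muN_nonneg hp, fun a ha x => muN_smul hp a ha x, ?_, ?_⟩
  · intro x y
    obtain ⟨u, hu, hmu⟩ := muN_exists_min hp x
    obtain ⟨v, hv, hmv⟩ := muN_exists_min hp y
    have h0 : p (x + y - (u + v)) = 0 := by
      have heq : x + y - (u + v) = (x - u) + (y - v) := by abel
      rw [heq]
      refine le_antisymm ?_ (hp.nonneg _)
      have := hp.add_le (x - u) (y - v)
      rw [hu, hv] at this
      simpa using this
    calc muN p (x + y) ≤ symNorm p (u + v) := muN_le hp h0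
      _ ≤ symNorm p u + symNorm p v := sym_add_le hp u v
      _ = muN p x + muN p y := by rw [hmu, hmv]
  · intro x h1 h2
    obtain ⟨u, hu, hmu⟩ := muN_exists_min hp x
    obtain ⟨v, hv, hmv⟩ := muN_exists_min hp (-x)
    rw [h1] at hmu; rw [h2] at hmv
    have hu0 : u = 0 := sym_eq_zero hp hmu
    have hv0 : v = 0 := sym_eq_zero hp hmv
    rw [hu0, sub_zero] at hu
    rw [hv0, sub_zero] at hv
    exact hp.eq_zero x hu hv

end Helpers
theorem statement12 {X : Type*} [AddCommGroup X] [Module ℝ X] [FiniteDimensional ℝ X]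
    (p : X → ℝ) (hp : IsAsymmetricNorm p) :
    RightBounded p ↔
      ∃ q : X → ℝ, IsAsymmetricNorm q ∧ EquivNorms p q ∧ OneBounded q := by
  constructor
  · rintro ⟨r, hr, hsub⟩
    -- unpack right boundedness pointwise
    have hsub' : ∀ y : X, p y ≤ r →
        ∃ s ∈ closedBallA (symNorm p) 0 1, ∃ t ∈ theta p, s + t = y := by
      intro y hy
      have hmem : y ∈ r • closedBallA p 0 1 := by
        rw [Set.mem_smul_set_iff_inv_smul_mem₀ (ne_of_gt hr)]
        show p (r⁻¹ • y - 0) ≤ 1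
        rw [sub_zero, hp.smul_eq r⁻¹ (by positivity)]
        rw [inv_mul_le_iff₀ hr, mul_one]
        exact hy
      exact Set.mem_add.mp (hsub hmem)
    refine ⟨muN p, muN_isAsym hp, ⟨r, 1, hr, one_pos, fun x => ⟨?_, ?_⟩⟩, ?_⟩
    · -- r * muN p x ≤ p x
      rcases eq_or_lt_of_le (hp.nonneg x) with h0 | h0
      · have hx0 : muN p x = 0 := by
          refine le_antisymm ?_ (muN_nonneg hp x)
          have := muN_le hp (u := 0) (x := x) (by rw [sub_zero]; exact h0.symm)
          simpa [sym_zero hp] using this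
        rw [hx0, mul_zero]
        exact hp.nonneg x
      · set a := r / p x with ha
        have ha' : 0 < a := by positivity
        have hpa : p (a • x) ≤ r := by
          rw [hp.smul_eq a ha'.le, ha, div_mul_cancel₀ _ (ne_of_gt h0)]
        obtain ⟨s, hs, t, ht, hst⟩ := hsub' (a • x) hpa
        have hms : muN p (a • x) ≤ symNorm p s := by
          refine muN_le hp ?_
          have : a • x - s = t := by rw [← hst]; abel
          rw [this]; exact ht
        have h1 : a * muN p x ≤ 1 := by
          rw [← muN_smul hp a ha'.le]
          exact hms.trans (by simpa [closedBallA] using hs)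
        rw [ha, div_mul_eq_mul_div, div_le_one h0] at h1
        linarith [h1]
    · rw [one_mul]; exact p_le_muN hp x
    · -- OneBounded (muN p)
      intro x hx
      have hx1 : muN p x ≤ 1 := by simpa [closedBallA] using hx
      obtain ⟨u, hu, hmu⟩ := muN_exists_min hp x
      refine Set.mem_add.mpr ⟨u, ?_, x - u, ?_, by abel⟩
      · show symNorm (muN p) (u - 0) ≤ 1
        rw [sub_zero]
        have h1 : muN p u ≤ symNorm p u := by
          have := muN_le hp (u := u) (x := u) (by simp [hp.map_zero'])
          exact this
        have h2 : muN p (-u) ≤ symNorm p u := by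
          have := muN_le hp (u := -u) (x := -u) (by simp [hp.map_zero'])
          rwa [sym_neg] at this
        have : symNorm (muN p) u ≤ symNorm p u := max_le h1 h2
        exact this.trans (hmu ▸ hx1)
      · show muN p (x - u) = 0
        refine le_antisymm ?_ (muN_nonneg hp _)
        have := muN_le hp (u := 0) (x := x - u) (by rwa [sub_zero])
        simpa [sym_zero hp] using this
  · rintro ⟨q, hq, ⟨κ, l, hκ, hl, hpq⟩, hqb⟩
    refine ⟨κ / l, by positivity, ?_⟩
    intro y hy
    have hpy : p y ≤ κ / l := by
      rw [Set.mem_smul_set_iff_inv_smul_mem₀ (by positivity : (κ/l : ℝ) ≠ 0)] at hy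
      have : p ((κ/l)⁻¹ • y - 0) ≤ 1 := hy
      rw [sub_zero, hp.smul_eq _ (by positivity)] at this
      calc p y = (κ/l) * ((κ/l)⁻¹ * p y) := by field_simp
        _ ≤ (κ/l) * 1 := by
            refine mul_le_mul_of_nonneg_left this (by positivity)
        _ = κ / l := mul_one _
    -- q (l • y) ≤ 1
    have hq1 : q (l • y) ≤ 1 := by
      have h1 : κ * q y ≤ p y := (hpq y).1
      have h2 : q y ≤ κ / l / κ := by
        rw [le_div_iff₀ hκ, mul_comm]
        exact h1.trans hpy
      rw [hq.smul_eq l hl.le]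
      calc l * q y ≤ l * (κ / l / κ) := mul_le_mul_of_nonneg_left h2 hl.le
        _ = 1 := by field_simp
    have hmem : l • y ∈ closedBallA (symNorm q) 0 1 + theta q := by
      apply hqb
      show q (l • y - 0) ≤ 1
      rwa [sub_zero]
    obtain ⟨s, hs, t, ht, hst⟩ := Set.mem_add.mp hmem
    refine Set.mem_add.mpr ⟨l⁻¹ • s, ?_, l⁻¹ • t, ?_, ?_⟩
    · show symNorm p (l⁻¹ • s - 0) ≤ 1
      rw [sub_zero, sym_smul hp, abs_of_pos (by positivity)]
      have hs1 : symNorm q s ≤ 1 := by simpa [closedBallA] using hs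
      have hps : symNorm p s ≤ l * symNorm q s := by
        refine max_le ?_ ?_
        · exact (hpq s).2.trans (mul_le_mul_of_nonneg_left (le_max_left _ _) hl.le)
        · exact (hpq (-s)).2.trans (mul_le_mul_of_nonneg_left (le_max_right _ _) hl.le)
      calc l⁻¹ * symNorm p s ≤ l⁻¹ * (l * symNorm q s) :=
            mul_le_mul_of_nonneg_left hps (by positivity)
        _ = symNorm q s := by field_simp
        _ ≤ 1 := hs1
    · show p (l⁻¹ • t) = 0
      have hqt : q t = 0 := ht
      have : p t ≤ l * q t := (hpq t).2
      rw [hqt, mul_zero] at this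
      have hpt : p t = 0 := le_antisymm this (hp.nonneg t)
      rw [hp.smul_eq _ (by positivity), hpt, mul_zero]
    · rw [← smul_add, hst, inv_smul_smul₀ (ne_of_gt hl)]
end

section
/- Let X be a finite-dimensional real vector space and p an asymmetric norm on X. If the origin has a neighborhood in the topology τ_p which is strongly compact, then p is right bounded. -/
open Pointwise Set

lemma aux_ball {X : Type*} [AddCommGroup X] [Module ℝ X] (q : X → ℝ)
    (hq : ∀ x y, q (x + y) ≤ q x + q y) (U : Set X)
    (hU : U ∈ @nhds X (asymTop q) 0) :
    ∃ ε : ℝ, 0 < ε ∧ {y | q y < ε} ⊆ U := by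
  letI := asymTop q
  rw [mem_nhds_iff] at hU
  obtain ⟨t, htU, hto, h0⟩ := hU
  have key : ∀ s : Set X, TopologicalSpace.GenerateOpen
      {U | ∃ x : X, ∃ ε : ℝ, 0 < ε ∧ U = {y | q (y - x) < ε}} s →
      (0 : X) ∈ s → ∃ ε : ℝ, 0 < ε ∧ {y | q y < ε} ⊆ s := by
    intro s hs
    induction hs with
    | basic u hu =>
      intro h0
      obtain ⟨x, ε, hε, rfl⟩ := hu
      refine ⟨ε - q (0 - x), by simpa using h0, fun y hy => ?_⟩
      have : q (y - x) ≤ q y + q (0 - x) := by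
        have := hq y (0 - x)
        simpa [sub_eq_add_neg, add_assoc] using this
      simp only [mem_setOf_eq] at hy ⊢
      linarith
    | univ => exact fun _ => ⟨1, one_pos, fun _ _ => trivial⟩
    | inter u v _ _ ihu ihv =>
      intro h0
      obtain ⟨ε₁, hε₁, h₁⟩ := ihu h0.1
      obtain ⟨ε₂, hε₂, h₂⟩ := ihv h0.2
      refine ⟨min ε₁ ε₂, lt_min hε₁ hε₂, fun y hy => ?_⟩
      simp only [mem_setOf_eq] at hy
      exact ⟨h₁ (lt_of_lt_of_le hy (min_le_left _ _)),
        h₂ (lt_of_lt_of_le hy (min_le_right _ _))⟩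
    | sUnion S _ ih =>
      intro h0
      obtain ⟨u, hu, h0u⟩ := h0
      obtain ⟨ε, hε, h⟩ := ih u hu h0u
      exact ⟨ε, hε, fun y hy => ⟨u, hu, h hy⟩⟩
  obtain ⟨ε, hε, h⟩ := key t hto h0
  exact ⟨ε, hε, h.trans htU⟩

lemma aux_bdd {X : Type*} [AddCommGroup X] [Module ℝ X] (q : X → ℝ) (S : Set X)
    (hS : @IsCompact X (asymTop q) S) :
    ∃ M : ℝ, 1 ≤ M ∧ ∀ s ∈ S, q s ≤ M := by
  letI := asymTop q
  have hopen : ∀ n : ℕ, IsOpen {y : X | q y < n + 1} := by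
    intro n
    apply TopologicalSpace.isOpen_generateFrom_of_mem
    exact ⟨0, n + 1, by positivity, by simp⟩
  have hcov : S ⊆ ⋃ n : ℕ, {y : X | q y < n + 1} := by
    intro s _
    refine mem_iUnion.mpr ⟨⌈q s⌉₊, ?_⟩
    exact mem_setOf_eq ▸ lt_of_le_of_lt (Nat.le_ceil _) (by norm_num)
  obtain ⟨t, ht⟩ := hS.elim_finite_subcover _ hopen hcov
  refine ⟨(t.sup id : ℕ) + 1, le_add_of_nonneg_left (Nat.cast_nonneg _), fun s hs => ?_⟩
  obtain ⟨n, hn, hsn⟩ := mem_iUnion₂.mp (ht hs)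
  have : (n : ℝ) ≤ (t.sup id : ℕ) := by
    exact_mod_cast Finset.le_sup (f := id) hn
  simp only [mem_setOf_eq] at hsn
  linarith

theorem statement13 {X : Type*} [AddCommGroup X] [Module ℝ X] [FiniteDimensional ℝ X]
    (p : X → ℝ) (hp : IsAsymmetricNorm p) (U : Set X)
    (hU : U ∈ @nhds X (asymTop p) 0) (hUc : StronglyCompact p U) :
    RightBounded p := by
  obtain ⟨S, hScomp, hSU, hUS⟩ := hUc
  obtain ⟨ε, hε, hball⟩ := aux_ball p hp.add_le U hU
  obtain ⟨M, hM1, hM⟩ := aux_bdd (symNorm p) S hScomp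
  have hM0 : (0 : ℝ) < M := lt_of_lt_of_le one_pos hM1
  have symsmul : ∀ a : ℝ, 0 ≤ a → ∀ y, symNorm p (a • y) = a * symNorm p y := by
    intro a ha y
    unfold symNorm
    rw [← smul_neg, hp.smul_eq a ha, hp.smul_eq a ha, mul_max_of_nonneg _ _ ha]
  refine ⟨ε / (2 * M), by positivity, ?_⟩
  rintro z hz
  rw [mem_smul_set] at hz
  obtain ⟨x, hx, rfl⟩ := hz
  have hx1 : p x ≤ 1 := by simpa [closedBallA] using hx
  have hmem : (ε / 2) • x ∈ U := by
    apply hball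
    have := hp.smul_eq (ε / 2) (by positivity) x
    simp only [mem_setOf_eq, this]
    nlinarith [hp.nonneg x]
  have hSθ := hUS hmem
  rw [Set.mem_add] at hSθ
  obtain ⟨s, hs, t, ht, hst⟩ := hSθ
  rw [Set.mem_add]
  refine ⟨(1 / M) • s, ?_, (1 / M) • t, ?_, ?_⟩
  · simp only [closedBallA, mem_setOf_eq, sub_zero]
    rw [symsmul _ (by positivity)]
    calc (1 / M) * symNorm p s ≤ (1 / M) * M :=
          mul_le_mul_of_nonneg_left (hM s hs) (by positivity)
      _ = 1 := by field_simp
  · simp only [theta, mem_setOf_eq] at ht ⊢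
    rw [hp.smul_eq _ (by positivity), ht, mul_zero]
  · rw [← smul_add, hst, smul_smul]
    congr 1
    ring
end

section
/- Let X be a finite-dimensional real vector space and p an asymmetric norm on X. Then the following statements are equivalent: (1) p is right bounded; (2) there exists an asymmetric norm q on X equivalent to p which is 1-bounded; (3) there exists an asymmetric norm q on X equivalent to p such that B_1^q[0] is strongly compact; (4) X with the topology τ_p is strongly locally compact. -/
open Pointwise Set

/-!
Everything happens in the normed space `(X, p^s)`, which is proper since `X` is
finite-dimensional, and in which `θ_p` is a closed salient convex cone.

(1 → 2) The distance `q = d_{p^s}(·, θ_p)` is an asymmetric norm with `p ≤ q`, and right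
boundedness of `p` is the reverse inequality `r q ≤ p`. Writing `x = (x - t) + t` with `t` a
nearest point of `θ_p = θ_q` shows that `q` is 1-bounded.
(2 → 3) `S = B_1^{q^s}[0]` is closed and `p^s`-bounded, hence compact, and 1-boundedness of `q`
says `B_1^q[0] ⊆ S + θ_q = S + θ_p`.
(3 → 4) The balls `B_c^q[x] = x + c • B_1^q[0]` are strongly compact and, by equivalence of `p`
and `q`, form a neighbourhood base of `x` in `τ_p`.
(4 → 1) A strongly compact neighbourhood `K ⊆ S + θ_p` of `0` contains a `p`-ball, and `S` is
`p^s`-bounded; rescaling gives `r • B_1^p[0] ⊆ B_1^{p^s}[0] + θ_p`.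
-/

section

open Metric

variable {X : Type*} [AddCommGroup X] {p q : X → ℝ}

def openBallA (q : X → ℝ) (x : X) (ε : ℝ) : Set X := {y | q (y - x) < ε}

@[simp]
theorem mem_openBallA {x y : X} {ε : ℝ} : y ∈ openBallA q x ε ↔ q (y - x) < ε := Iff.rfl

theorem openBallA_mono {x : X} {ε δ : ℝ} (h : ε ≤ δ) :
    openBallA p x ε ⊆ openBallA p x δ :=
  fun _ hy => lt_of_lt_of_le hy h

theorem mem_closedBallA_zero {y : X} {r : ℝ} : y ∈ closedBallA q 0 r ↔ q y ≤ r := by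
  simp [closedBallA]

theorem closedBallA_subset_openBallA {x : X} {r ε : ℝ} (h : r < ε) :
    closedBallA p x r ⊆ openBallA p x ε :=
  fun _ hy => lt_of_le_of_lt hy h

theorem closedBallA_eq_vadd (x : X) (r : ℝ) : closedBallA p x r = x +ᵥ closedBallA p 0 r := by
  ext y
  simp [Set.mem_vadd_set_iff_neg_vadd_mem, closedBallA, neg_add_eq_sub]

theorem le_symNorm (x : X) : p x ≤ symNorm p x := le_max_left _ _

theorem symNorm_neg (x : X) : symNorm p (-x) = symNorm p x := by
  simp [symNorm, max_comm]

theorem EquivNorms.symNorm (hpq : EquivNorms p q) : EquivNorms (symNorm p) (symNorm q) := by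
  obtain ⟨κ, l, hκ, hl, h⟩ := hpq
  refine ⟨κ, l, hκ, hl, fun x => ⟨?_, ?_⟩⟩
  · rw [_root_.symNorm, _root_.symNorm, mul_max_of_nonneg _ _ hκ.le]
    exact max_le_max (h x).1 (h (-x)).1
  · rw [_root_.symNorm, _root_.symNorm, mul_max_of_nonneg _ _ hl.le]
    exact max_le_max (h x).2 (h (-x)).2

variable [Module ℝ X]

namespace IsAsymmetricNorm

theorem map_zero_s14 (hp : IsAsymmetricNorm p) : p 0 = 0 := by
  simpa using hp.smul_eq 0 le_rfl 0

theorem le_sub_add (hp : IsAsymmetricNorm p) (x y : X) : p x ≤ p (x - y) + p y := by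
  simpa using hp.add_le (x - y) y

protected theorem symNorm (hp : IsAsymmetricNorm p) : IsAsymmetricNorm (symNorm p) where
  nonneg x := (hp.nonneg x).trans (le_symNorm x)
  smul_eq a ha x := by simp only [symNorm, ← smul_neg, hp.smul_eq a ha, mul_max_of_nonneg _ _ ha]
  add_le x y := by
    refine max_le ((hp.add_le x y).trans (add_le_add (le_max_left _ _) (le_max_left _ _))) ?_
    rw [neg_add]
    exact (hp.add_le _ _).trans (add_le_add (le_max_right _ _) (le_max_right _ _))
  eq_zero x hx _ := hp.eq_zero x (le_antisymm ((le_symNorm x).trans hx.le) (hp.nonneg x))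
    (le_antisymm ((le_max_right _ _).trans hx.le) (hp.nonneg _))

theorem symNorm_smul (hp : IsAsymmetricNorm p) (a : ℝ) (x : X) :
    symNorm p (a • x) = |a| * symNorm p x := by
  rcases le_or_gt 0 a with ha | ha
  · rw [abs_of_nonneg ha, hp.symNorm.smul_eq a ha]
  · rw [abs_of_neg ha, ← symNorm_neg, ← neg_smul, hp.symNorm.smul_eq _ (neg_nonneg.2 ha.le)]

theorem zero_mem_theta (hp : IsAsymmetricNorm p) : (0 : X) ∈ theta p := hp.map_zero_s14

theorem add_mem_theta (hp : IsAsymmetricNorm p) {x y : X} (hx : x ∈ theta p)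
    (hy : y ∈ theta p) : x + y ∈ theta p :=
  le_antisymm (by simpa [theta, hx.out, hy.out] using hp.add_le x y) (hp.nonneg _)

theorem smul_mem_theta (hp : IsAsymmetricNorm p) {a : ℝ} (ha : 0 ≤ a) {x : X}
    (hx : x ∈ theta p) : a • x ∈ theta p := by
  simp [theta, hp.smul_eq a ha, hx.out]

theorem smul_theta_subset (hp : IsAsymmetricNorm p) {a : ℝ} (ha : 0 ≤ a) :
    a • theta p ⊆ theta p :=
  Set.smul_set_subset_iff.2 fun _ hx => hp.smul_mem_theta ha hx

theorem smul_theta (hp : IsAsymmetricNorm p) {a : ℝ} (ha : 0 < a) : a • theta p = theta p :=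
  (hp.smul_theta_subset ha.le).antisymm fun _ hx =>
    (Set.mem_smul_set_iff_inv_smul_mem₀ ha.ne' _ _).2 (hp.smul_mem_theta (inv_nonneg.2 ha.le) hx)

theorem smul_closedBallA_zero (hp : IsAsymmetricNorm p) {c : ℝ} (hc : 0 < c) (r : ℝ) :
    c • closedBallA p 0 r = closedBallA p 0 (c * r) := by
  ext y
  rw [Set.mem_smul_set_iff_inv_smul_mem₀ hc.ne', mem_closedBallA_zero, mem_closedBallA_zero,
    hp.smul_eq _ (inv_nonneg.2 hc.le), inv_mul_le_iff₀ hc]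

theorem mul_le_of_smul_closedBallA_subset (hp : IsAsymmetricNorm p) (hq : IsAsymmetricNorm q)
    {r : ℝ} (hr : 0 < r) (h : r • closedBallA p 0 1 ⊆ closedBallA q 0 1) (x : X) :
    r * q x ≤ p x := by
  have key : ∀ a, 0 ≤ a → a * p x ≤ 1 → a * (r * q x) ≤ 1 := fun a ha hax => by
    have := h (Set.smul_mem_smul_set (a := r) (mem_closedBallA_zero.2
      (by rwa [hp.smul_eq a ha] : p (a • x) ≤ 1)))
    rwa [mem_closedBallA_zero, smul_smul, hq.smul_eq _ (mul_nonneg hr.le ha), mul_comm r a,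
      mul_assoc] at this
  rcases (hp.nonneg x).eq_or_lt with hpx | hpx
  -- if `p x = 0`, the whole ray through `x` lies in `B_1^p[0]`, which forces `q x = 0`
  · by_contra! hlt
    rw [← hpx] at hlt
    have := key (2 / (r * q x)) (div_pos two_pos hlt).le (by simp [← hpx])
    rw [div_mul_cancel₀ _ hlt.ne'] at this
    norm_num at this
  · simpa [inv_mul_le_iff₀ hpx] using key (p x)⁻¹ (inv_nonneg.2 hpx.le) (by simp [hpx.ne'])

end IsAsymmetricNorm

theorem EquivNorms.theta_eq (hpq : EquivNorms p q) (hp : IsAsymmetricNorm p)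
    (hq : IsAsymmetricNorm q) :
    theta q = theta p := by
  obtain ⟨κ, l, hκ, hl, h⟩ := hpq
  ext x
  constructor
  · intro hx
    exact le_antisymm (by simpa [hx.out] using (h x).2) (hp.nonneg x)
  · intro hx
    exact le_antisymm (by nlinarith [(h x).1, hx.out]) (hq.nonneg x)

theorem openBallA_sub_subset (hp : IsAsymmetricNorm p) (x y : X) (ε : ℝ) :
    openBallA p y (ε - p (y - x)) ⊆ openBallA p x ε := fun z hz => by
  have := hp.add_le (z - y) (y - x)
  rw [sub_add_sub_cancel] at this
  exact lt_of_le_of_lt this (by simpa [lt_sub_iff_add_lt] using hz)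

theorem isTopologicalBasis_openBallA (hp : IsAsymmetricNorm p) :
    TopologicalSpace.IsTopologicalBasis (t := asymTop p)
      {U | ∃ x ε, 0 < ε ∧ U = openBallA p x ε} := by
  let := asymTop p
  refine ⟨?_, ?_, rfl⟩
  · rintro _ ⟨x₁, ε₁, -, rfl⟩ _ ⟨x₂, ε₂, -, rfl⟩ y ⟨hy₁, hy₂⟩
    rw [mem_openBallA] at hy₁ hy₂
    refine ⟨openBallA p y (min (ε₁ - p (y - x₁)) (ε₂ - p (y - x₂))),
      ⟨y, _, lt_min (sub_pos.2 hy₁) (sub_pos.2 hy₂), rfl⟩, ?_, ?_⟩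
    · simp [hp.map_zero_s14, hy₁, hy₂]
    · exact Set.subset_inter
        ((openBallA_mono (min_le_left _ _)).trans (openBallA_sub_subset hp _ _ _))
        ((openBallA_mono (min_le_right _ _)).trans (openBallA_sub_subset hp _ _ _))
  · exact Set.eq_univ_of_forall fun x =>
      ⟨openBallA p x 1, ⟨x, 1, one_pos, rfl⟩, by simp [hp.map_zero_s14]⟩

theorem hasBasis_nhds_asymTop (hp : IsAsymmetricNorm p) (x : X) :
    (@nhds X (asymTop p) x).HasBasis (0 < ·) (openBallA p x) := by
  let := asymTop p
  refine (isTopologicalBasis_openBallA hp).nhds_hasBasis.to_hasBasis ?_ ?_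
  · rintro _ ⟨⟨z, ε, -, rfl⟩, hx⟩
    exact ⟨ε - p (x - z), sub_pos.2 hx, openBallA_sub_subset hp _ _ _⟩
  · intro ε hε
    exact ⟨openBallA p x ε, ⟨⟨x, ε, hε, rfl⟩, by simpa [hp.map_zero_s14]⟩, le_rfl⟩

section Normed

variable {E : Type*} [NormedAddCommGroup E] [NormedSpace ℝ E]

theorem isAsymmetricNorm_norm : IsAsymmetricNorm (‖·‖ : E → ℝ) where
  nonneg := norm_nonneg
  smul_eq a ha x := by rw [norm_smul, Real.norm_of_nonneg ha]
  add_le := norm_add_le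
  eq_zero _ h _ := norm_eq_zero.1 h

theorem asymTop_norm : asymTop (‖·‖ : E → ℝ) = (inferInstance : TopologicalSpace E) := by
  refine TopologicalSpace.ext_nhds fun x => ?_
  have hball : openBallA (‖·‖) x = ball x := by
    ext ε y
    simp [dist_eq_norm]
  exact (hasBasis_nhds_asymTop isAsymmetricNorm_norm x).eq_of_same_basis
    (hball ▸ nhds_basis_ball)

theorem IsAsymmetricNorm.continuous_of_le_mul_norm {q : E → ℝ} (hq : IsAsymmetricNorm q)
    {C : ℝ} (hC : ∀ x, q x ≤ C * ‖x‖) : Continuous q :=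
  (LipschitzWith.of_le_add_mul' C fun x y => by
    rw [dist_eq_norm]
    linarith [hq.le_sub_add x y, hC (x - y)]).continuous

variable [ProperSpace E] {C : ConvexCone ℝ E}

theorem ConvexCone.isAsymmetricNorm_infDist (hC : IsClosed (C : Set E)) (h0 : C.Pointed)
    (hs : C.Salient) : IsAsymmetricNorm (infDist · (C : Set E)) where
  nonneg _ := infDist_nonneg
  smul_eq a ha x := by
    rcases ha.eq_or_lt with rfl | ha
    · simp [infDist_zero_of_mem h0]
    · have hCa : a • (C : Set E) = C := Set.Subset.antisymm
        (Set.smul_set_subset_iff.2 fun _ hy => C.smul_mem ha hy)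
        fun y hy =>
          (Set.mem_smul_set_iff_inv_smul_mem₀ ha.ne' _ _).2 (C.smul_mem (inv_pos.2 ha) hy)
      calc infDist (a • x) C = infDist (a • x) (a • (C : Set E)) := by rw [hCa]
        _ = a * infDist x C := by rw [infDist_smul₀ ha.ne', Real.norm_of_nonneg ha.le]
  add_le x y := by
    obtain ⟨s, hs, hxs⟩ := hC.exists_infDist_eq_dist ⟨0, h0⟩ x
    obtain ⟨t, ht, hyt⟩ := hC.exists_infDist_eq_dist ⟨0, h0⟩ y
    calc infDist (x + y) C ≤ dist (x + y) (s + t) := infDist_le_dist_of_mem (C.add_mem hs ht)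
      _ ≤ dist x s + dist y t := dist_add_add_le _ _ _ _
      _ = infDist x C + infDist y C := by rw [hxs, hyt]
  eq_zero x hx hnx := by
    rw [← hC.mem_iff_infDist_zero ⟨0, h0⟩] at hx hnx
    by_contra hne
    exact hs x hx hne hnx

theorem ConvexCone.oneBounded_infDist (hC : IsClosed (C : Set E)) (h0 : C.Pointed) :
    OneBounded (infDist · (C : Set E)) := by
  intro x hx
  rw [mem_closedBallA_zero] at hx
  obtain ⟨t, ht, hxt⟩ := hC.exists_infDist_eq_dist ⟨0, h0⟩ x
  have hle : ∀ y, infDist y C ≤ ‖y‖ := fun y => by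
    simpa using infDist_le_dist_of_mem (x := y) h0
  have hxt1 : ‖x - t‖ ≤ 1 := by
    rwa [← dist_eq_norm, ← hxt]
  refine ⟨x - t, mem_closedBallA_zero.2 (max_le ?_ ?_), t, ?_, sub_add_cancel x t⟩
  · exact (hle _).trans hxt1
  · exact (hle _).trans (by rwa [norm_neg])
  · exact infDist_zero_of_mem ht

end Normed

abbrev symNormedAddCommGroup (hp : IsAsymmetricNorm p) : NormedAddCommGroup X :=
  AddGroupNorm.toNormedAddCommGroup
    { toFun := symNorm p
      map_zero' := hp.symNorm.map_zero_s14
      add_le' := hp.symNorm.add_le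
      neg' := symNorm_neg
      eq_zero_of_map_eq_zero' := fun x hx => hp.symNorm.eq_zero x hx (by rwa [symNorm_neg]) }

abbrev symNormedSpace (hp : IsAsymmetricNorm p) :
    @NormedSpace ℝ X _ (symNormedAddCommGroup hp).toSeminormedAddCommGroup :=
  let := symNormedAddCommGroup hp
  { norm_smul_le := fun a x => (hp.symNorm_smul a x).le }

theorem asymTop_symNorm (hp : IsAsymmetricNorm p) :
    asymTop (symNorm p) = (symNormedAddCommGroup hp).toUniformSpace.toTopologicalSpace :=
  @asymTop_norm X (symNormedAddCommGroup hp) (symNormedSpace hp)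

def IsAsymmetricNorm.thetaCone (hp : IsAsymmetricNorm p) : ConvexCone ℝ X where
  carrier := theta p
  smul_mem' _ hc _ hx := hp.smul_mem_theta hc.le hx
  add_mem' _ hx _ hy := hp.add_mem_theta hx hy

theorem StronglyCompact.smul (hp : IsAsymmetricNorm p) {K : Set X} (hK : StronglyCompact p K)
    {c : ℝ} (hc : 0 ≤ c) : StronglyCompact p (c • K) := by
  obtain ⟨S, hS, hSK, hKS⟩ := hK
  refine ⟨c • S, ?_, Set.smul_set_mono hSK, ?_⟩
  · rw [asymTop_symNorm hp] at hS ⊢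
    let := symNormedAddCommGroup hp
    let := symNormedSpace hp
    exact hS.smul c
  · calc c • K ⊆ c • (S + theta p) := Set.smul_set_mono hKS
      _ = c • S + c • theta p := smul_add _ _ _
      _ ⊆ c • S + theta p := Set.add_subset_add_left (hp.smul_theta_subset hc)

theorem StronglyCompact.vadd (hp : IsAsymmetricNorm p) {K : Set X} (hK : StronglyCompact p K)
    (x : X) : StronglyCompact p (x +ᵥ K) := by
  obtain ⟨S, hS, hSK, hKS⟩ := hK
  refine ⟨x +ᵥ S, ?_, Set.vadd_set_mono hSK, ?_⟩
  · rw [asymTop_symNorm hp] at hS ⊢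
    let := symNormedAddCommGroup hp
    exact hS.vadd x
  · calc x +ᵥ K ⊆ x +ᵥ (S + theta p) := Set.vadd_set_mono hKS
      _ = (x +ᵥ S) + theta p := (vadd_add_assoc x S _).symm

theorem exists_equivNorms_oneBounded [FiniteDimensional ℝ X] (hp : IsAsymmetricNorm p)
    (h : RightBounded p) :
    ∃ q : X → ℝ, IsAsymmetricNorm q ∧ EquivNorms p q ∧ OneBounded q := by
  obtain ⟨r, hr, hrb⟩ := h
  let := symNormedAddCommGroup hp
  let := symNormedSpace hp
  have : ProperSpace X := FiniteDimensional.proper ℝ X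
  have hθ : IsClosed (theta p) :=
    isClosed_singleton.preimage (hp.continuous_of_le_mul_norm (C := 1) fun x => by
      rw [one_mul]
      exact le_symNorm x)
  have hq := hp.thetaCone.isAsymmetricNorm_infDist hθ hp.zero_mem_theta
    fun x hx hne hnx => hne (hp.eq_zero x hx hnx)
  set q := (infDist · (theta p))
  have hp_le : ∀ x, p x ≤ q x := fun x =>
    (le_infDist ⟨0, hp.zero_mem_theta⟩).2 fun t ht => by
      have : p (x - t) ≤ dist x t := by
        rw [dist_eq_norm]
        exact le_symNorm (x - t)
      linarith [hp.le_sub_add x t, ht.out]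
  have hball : closedBallA (symNorm p) 0 1 + theta p ⊆ closedBallA q 0 1 := by
    rintro _ ⟨b, hb, t, ht, rfl⟩
    rw [mem_closedBallA_zero] at hb ⊢
    calc q (b + t) ≤ dist (b + t) t := infDist_le_dist_of_mem ht
      _ ≤ 1 := by rwa [dist_eq_norm, add_sub_cancel_right]
  refine ⟨q, hq, ⟨r, 1, hr, one_pos, fun x => ⟨?_, by simpa using hp_le x⟩⟩,
    hp.thetaCone.oneBounded_infDist hθ hp.zero_mem_theta⟩
  exact hp.mul_le_of_smul_closedBallA_subset hq hr (hrb.trans hball) x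

theorem stronglyCompact_closedBallA_of_oneBounded [FiniteDimensional ℝ X]
    (hp : IsAsymmetricNorm p) (hq : IsAsymmetricNorm q) (hpq : EquivNorms p q)
    (h1 : OneBounded q) : StronglyCompact p (closedBallA q 0 1) := by
  let := symNormedAddCommGroup hp
  let := symNormedSpace hp
  have : ProperSpace X := FiniteDimensional.proper ℝ X
  obtain ⟨κ, l, hκ, hl, hs⟩ := hpq.symNorm
  refine ⟨closedBallA (symNorm q) 0 1, ?_, fun y hy => ?_, hpq.theta_eq hp hq ▸ h1⟩
  · rw [asymTop_symNorm hp]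
    have hcont : Continuous (symNorm q) := hq.symNorm.continuous_of_le_mul_norm (C := κ⁻¹)
      fun x => by rw [inv_mul_eq_div, le_div_iff₀' hκ]; exact (hs x).1
    refine isCompact_of_isClosed_isBounded ?_ ((isBounded_closedBall (x := 0) (r := l)).subset ?_)
    · exact isClosed_le (hcont.comp (continuous_sub_right 0)) continuous_const
    · intro y hy
      rw [mem_closedBallA_zero] at hy
      rw [mem_closedBall_zero_iff]
      exact (hs y).2.trans (by simpa using mul_le_mul_of_nonneg_left hy hl.le)
  · rw [mem_closedBallA_zero] at hy ⊢
    exact (le_symNorm y).trans hy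

theorem stronglyLocallyCompact_of_stronglyCompact_closedBallA (hp : IsAsymmetricNorm p)
    (hq : IsAsymmetricNorm q) (hpq : EquivNorms p q) (hK : StronglyCompact p (closedBallA q 0 1)) :
    StronglyLocallyCompact p := by
  obtain ⟨κ, l, hκ, hl, h⟩ := hpq
  intro x U hU
  obtain ⟨δ, hδ, hδU⟩ := (hasBasis_nhds_asymTop hp x).mem_iff.1 hU
  have hc : 0 < δ / (2 * l) := by positivity
  refine ⟨closedBallA q x (δ / (2 * l)), ?_, ?_, fun y hy => hδU ?_⟩
  · rw [closedBallA_eq_vadd, ← mul_one (δ / (2 * l)), ← hq.smul_closedBallA_zero hc]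
    exact (hK.smul hp hc.le).vadd hp x
  · refine (hasBasis_nhds_asymTop hp x).mem_iff.2
      ⟨κ * (δ / (2 * l)), by positivity, fun y hy => ?_⟩
    exact (mul_le_mul_iff_of_pos_left hκ).1 (((h (y - x)).1).trans hy.le)
  · calc p (y - x) ≤ l * q (y - x) := (h (y - x)).2
      _ ≤ l * (δ / (2 * l)) := mul_le_mul_of_nonneg_left hy hl.le
      _ = δ / 2 := by field_simp
      _ < δ := half_lt_self hδ

theorem rightBounded_of_stronglyLocallyCompact (hp : IsAsymmetricNorm p)
    (h : StronglyLocallyCompact p) : RightBounded p := by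
  obtain ⟨K, ⟨S, hS, -, hKS⟩, hK0, -⟩ := h 0 Set.univ Filter.univ_mem
  obtain ⟨δ, hδ, hδK⟩ := (hasBasis_nhds_asymTop hp 0).mem_iff.1 hK0
  obtain ⟨M, hM, hSM⟩ : ∃ M > 0, S ⊆ closedBallA (symNorm p) 0 M := by
    rw [asymTop_symNorm hp] at hS
    let := symNormedAddCommGroup hp
    obtain ⟨M, hM, hSM⟩ := hS.isBounded.subset_closedBall_lt 0 0
    refine ⟨M, hM, fun y hy => mem_closedBallA_zero.2 ?_⟩
    exact mem_closedBall_zero_iff.1 (hSM hy)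
  refine ⟨M⁻¹ * (δ / 2), by positivity, ?_⟩
  calc (M⁻¹ * (δ / 2)) • closedBallA p 0 1 = M⁻¹ • closedBallA p 0 (δ / 2) := by
        rw [mul_smul, hp.smul_closedBallA_zero (half_pos hδ), mul_one]
    _ ⊆ M⁻¹ • (closedBallA (symNorm p) 0 M + theta p) := Set.smul_set_mono
        (((closedBallA_subset_openBallA (half_lt_self hδ)).trans hδK).trans
          (hKS.trans (Set.add_subset_add_right hSM)))
    _ = closedBallA (symNorm p) 0 1 + theta p := by
        rw [smul_add, hp.symNorm.smul_closedBallA_zero (inv_pos.2 hM), inv_mul_cancel₀ hM.ne',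
          hp.smul_theta (inv_pos.2 hM)]

end

theorem statement14 {X : Type*} [AddCommGroup X] [Module ℝ X] [FiniteDimensional ℝ X]
    (p : X → ℝ) (hp : IsAsymmetricNorm p) :
    List.TFAE [
      RightBounded p,
      ∃ q : X → ℝ, IsAsymmetricNorm q ∧ EquivNorms p q ∧ OneBounded q,
      ∃ q : X → ℝ, IsAsymmetricNorm q ∧ EquivNorms p q ∧
        StronglyCompact p (closedBallA q 0 1),
      StronglyLocallyCompact p ] := by
  tfae_have 1 → 2 := exists_equivNorms_oneBounded hp
  tfae_have 2 → 3 := fun ⟨q, hq, hpq, h1⟩ =>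
    ⟨q, hq, hpq, stronglyCompact_closedBallA_of_oneBounded hp hq hpq h1⟩
  tfae_have 3 → 4 := fun ⟨q, hq, hpq, hK⟩ =>
    stronglyLocallyCompact_of_stronglyCompact_closedBallA hp hq hpq hK
  tfae_have 4 → 1 := rightBounded_of_stronglyLocallyCompact hp
  tfae_finish
end

section
/- There exists an asymmetric norm q on ℝ³ such that the closed unit ball B_1^q[0] = {y ∈ ℝ³ : q(y) ≤ 1} is compact in the topology τ_q but is not strongly compact. -/
open Pointwise Set

/-!
The unit ball of `q` is `B = {(x, y, z) : (x, y) ∈ D, f (x, y) ≤ z + 1}`, where `D` is the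
compact region between the parabola `y = x² - 1` and the line `y = 1`, and `f = ⨆ n, spike n` is
a supremum of affine functions whose positivity sets in `D` are disjoint thin strips around the
points `apex n` of the parabola, with `spike n (apex n) = n`. So `f` is finite and lower
semicontinuous on `D` but unbounded, and `θ_q` is the upward vertical ray.

Every `τ_q`-neighbourhood of `x` contains `x + θ_q`, so `B = graph (f - 1) + θ_q` is
`τ_q`-compact as soon as the graph is, and the graph is the image of `D` under a map that is
`τ_q`-continuous because `f` is lower semicontinuous. On the other hand a `q^s`-compact `S` is
`q^s`-bounded, so the heights of its points are bounded above, whereas `B ⊆ S + θ_q` forces `S`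
to contain, for every `n`, a point above `apex n` of height at least `n - 1`.
-/

open Filter Topology

section AsymmetricTopology

variable {X : Type*} [AddCommGroup X] [Module ℝ X] {q : X → ℝ}

theorem tendsto_asymTop_of_forall_eventually_lt (hq : ∀ x y, q (x + y) ≤ q x + q y)
    {α : Type*} {l : Filter α} {f : α → X} {x : X}
    (h : ∀ ε > 0, ∀ᶠ a in l, q (f a - x) < ε) : Tendsto f l (@nhds X (asymTop q) x) := by
  rw [asymTop, TopologicalSpace.tendsto_nhds_generateFrom_iff]
  rintro _ ⟨c, ε, -, rfl⟩ (hx : q (x - c) < ε)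
  filter_upwards [h (ε - q (x - c)) (by linarith)] with a ha
  calc q (f a - c) = q ((f a - x) + (x - c)) := by rw [sub_add_sub_cancel]
    _ ≤ q (f a - x) + q (x - c) := hq _ _
    _ < ε := by linarith

theorem specializes_asymTop_add (hq : ∀ x y, q (x + y) ≤ q x + q y) {t : X} (ht : q t = 0)
    (x : X) : @Specializes X (asymTop q) (x + t) x := by
  let _ := asymTop q
  rw [specializes_iff_pure]
  exact tendsto_asymTop_of_forall_eventually_lt hq (l := pure (x + t)) (f := id)
    fun ε hε => by simpa [ht] using hε

theorem IsCompact.of_subset_nhdsKer {Y : Type*} [TopologicalSpace Y] {K T : Set Y}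
    (hK : IsCompact K) (hKT : K ⊆ T) (hT : T ⊆ nhdsKer K) : IsCompact T := by
  rw [isCompact_iff_finite_subcover] at hK ⊢
  intro ι U hU hcov
  obtain ⟨t, ht⟩ := hK U hU (hKT.trans hcov)
  exact ⟨t, hT.trans ((isOpen_biUnion fun i _ => hU i).nhdsKer_subset.2 ht)⟩

theorem isCompact_asymTop_of_subset_add_theta (hq : ∀ x y, q (x + y) ≤ q x + q y)
    {K T : Set X} (hK : @IsCompact X (asymTop q) K) (hKT : K ⊆ T) (hT : T ⊆ K + theta q) :
    @IsCompact X (asymTop q) T := by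
  let _ := asymTop q
  refine hK.of_subset_nhdsKer hKT fun y hy => ?_
  obtain ⟨x, hx, t, ht, rfl⟩ := hT hy
  exact mem_nhdsKer_iff_specializes.2 ⟨x, hx, specializes_asymTop_add hq ht x⟩

theorem exists_forall_lt_of_isCompact_asymTop {S : Set X} (hS : @IsCompact X (asymTop q) S) :
    ∃ R : ℝ, ∀ s ∈ S, q s < R := by
  let _ := asymTop q
  obtain ⟨n, hn⟩ := hS.elim_directed_cover (fun n : ℕ => {y | q (y - 0) < n + 1})
    (fun n => TopologicalSpace.isOpen_generateFrom_of_mem ⟨0, n + 1, by positivity, rfl⟩)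
    (fun s _ => mem_iUnion.2 ⟨⌈q (s - 0)⌉₊, show q (s - 0) < _ + 1 by
      linarith [Nat.le_ceil (q (s - 0))]⟩)
    (Monotone.directed_le fun m n hmn y (hy : q (y - 0) < m + 1) =>
      show q (y - 0) < n + 1 by linarith [(Nat.cast_le (α := ℝ)).2 hmn])
  exact ⟨n + 1, fun s hs => by simpa using hn hs⟩

end AsymmetricTopology

theorem le_gauge_of_forall_le_one {E : Type*} [AddCommGroup E] [Module ℝ E] {s : Set E}
    (hs : Absorbent ℝ s) {φ : E →ₗ[ℝ] ℝ} (hφ : ∀ w ∈ s, φ w ≤ 1) (x : E) :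
    φ x ≤ gauge s x := by
  refine le_of_forall_gt_imp_ge_of_dense fun a ha => ?_
  obtain ⟨b, hb0, hba, w, hw, rfl⟩ := exists_lt_of_gauge_lt hs ha
  rw [map_smul, smul_eq_mul]
  nlinarith [hφ w hw]

def parabolicRegion : Set (ℝ × ℝ) := {p | p.1 ^ 2 ≤ p.2 + 1 ∧ p.2 ≤ 1}

def spike (n : ℕ) (p : ℝ × ℝ) : ℝ := n - 16 * n ^ 3 * (n ^ 2 * (p.2 + 1) - 2 * n * p.1 + 1)

noncomputable def apex (n : ℕ) : ℝ × ℝ := ((n : ℝ)⁻¹, (n : ℝ)⁻¹ ^ 2 - 1)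

section Spike

variable {p : ℝ × ℝ}

theorem spike_eq (n : ℕ) (p : ℝ × ℝ) :
    spike n p = n - 16 * n ^ 3 * ((n * p.1 - 1) ^ 2 + n ^ 2 * (p.2 + 1 - p.1 ^ 2)) := by
  unfold spike; ring

theorem spike_zero (p : ℝ × ℝ) : spike 0 p = 0 := by simp [spike]

theorem continuous_spike (n : ℕ) : Continuous (spike n) := by unfold spike; fun_prop

theorem spike_le (hp : p ∈ parabolicRegion) (n : ℕ) : spike n p ≤ n := by
  have h : 0 ≤ 16 * (n : ℝ) ^ 3 * ((n * p.1 - 1) ^ 2 + n ^ 2 * (p.2 + 1 - p.1 ^ 2)) := by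
    have := sub_nonneg.2 hp.1; positivity
  rw [spike_eq]; linarith

theorem spike_apex (n : ℕ) : spike n (apex n) = n := by
  rcases eq_or_ne n 0 with rfl | hn
  · simp [spike_zero]
  · have : (n : ℝ) * (n : ℝ)⁻¹ = 1 := mul_inv_cancel₀ (Nat.cast_ne_zero.2 hn)
    simp [spike_eq, apex, this]

theorem apex_mem (n : ℕ) : apex n ∈ parabolicRegion := by
  have : (n : ℝ)⁻¹ ≤ 1 := Nat.cast_inv_le_one n
  refine ⟨by simp [apex], ?_⟩
  simp only [apex]
  nlinarith [inv_nonneg.2 (Nat.cast_nonneg (α := ℝ) n)]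

theorem abs_mul_mul_sub_one_lt_one_of_spike_pos {n : ℕ} (hp : p ∈ parabolicRegion)
    (h : 0 < spike n p) : |4 * n * (n * p.1 - 1)| < 1 := by
  have hn : (0 : ℝ) < n := by
    rcases Nat.eq_zero_or_pos n with rfl | hn
    · simp [spike_zero] at h
    · exact_mod_cast hn
  rw [← sq_lt_one_iff_abs_lt_one]
  rw [spike_eq] at h
  nlinarith [mul_nonneg (pow_nonneg hn.le 5) (sub_nonneg.2 hp.1)]

theorem eq_of_spike_pos {m n : ℕ} (hp : p ∈ parabolicRegion) (hm : 0 < spike m p)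
    (hn : 0 < spike n p) : m = n := by
  wlog hmn : m < n generalizing m n
  · rcases (not_lt.1 hmn).lt_or_eq with h | h
    · exact (this hn hm h).symm
    · exact h.symm
  exfalso
  have hm' := abs_lt.1 (abs_mul_mul_sub_one_lt_one_of_spike_pos hp hm)
  have hn' := abs_lt.1 (abs_mul_mul_sub_one_lt_one_of_spike_pos hp hn)
  have h1 : (1 : ℝ) ≤ m := by
    rcases Nat.eq_zero_or_pos m with rfl | h
    · simp [spike_zero] at hm
    · exact_mod_cast h
  have h2 : (m : ℝ) + 1 ≤ n := by exact_mod_cast hmn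
  have hn0 : (0 : ℝ) < n := by linarith
  have hlow : 4 * m - 1 < 4 * m ^ 2 * p.1 := by linarith [hm'.1]
  have hupp : 4 * n ^ 2 * p.1 < 4 * n + 1 := by linarith [hn'.2]
  have h3 : (4 * (m : ℝ) - 1) * n ^ 2 < (4 * n + 1) * m ^ 2 :=
    calc (4 * m - 1) * n ^ 2 < 4 * m ^ 2 * p.1 * n ^ 2 := by gcongr
      _ = m ^ 2 * (4 * n ^ 2 * p.1) := by ring
      _ < m ^ 2 * (4 * n + 1) := by gcongr
      _ = (4 * n + 1) * m ^ 2 := by ring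
  have he : (0 : ℝ) ≤ n - m - 1 := by linarith
  -- with `e = n - m - 1`, `(4m - 1)n² - (4n + 1)m² = 2m² + 2m - 1 + e(4m² + 6m - 2) + e²(4m - 1)`
  nlinarith [mul_nonneg (mul_nonneg he he) (by linarith : (0 : ℝ) ≤ 4 * m - 1),
    mul_nonneg he (by nlinarith : (0 : ℝ) ≤ 4 * m ^ 2 + 6 * m - 2)]

noncomputable def spikeHeight (p : ℝ × ℝ) : ℝ := ⨆ n : ℕ, spike n p

theorem bddAbove_range_spike (hp : p ∈ parabolicRegion) :
    BddAbove (range fun n => spike n p) := by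
  by_cases h : ∃ m, 0 < spike m p
  · obtain ⟨m, hm⟩ := h
    refine ⟨m, forall_mem_range.2 fun n => ?_⟩
    rcases le_or_gt (spike n p) 0 with hn | hn
    · exact hn.trans (Nat.cast_nonneg m)
    · rw [eq_of_spike_pos hp hn hm]
      exact spike_le hp m
  · push Not at h
    exact ⟨0, forall_mem_range.2 h⟩

theorem spike_le_spikeHeight (hp : p ∈ parabolicRegion) (n : ℕ) : spike n p ≤ spikeHeight p :=
  le_ciSup (bddAbove_range_spike hp) n

theorem lowerSemicontinuousOn_spikeHeight :
    LowerSemicontinuousOn spikeHeight parabolicRegion :=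
  lowerSemicontinuousOn_ciSup (fun _ hp => bddAbove_range_spike hp)
    fun n => (continuous_spike n).lowerSemicontinuous.lowerSemicontinuousOn _

end Spike

-- The shift by one puts the origin in the interior: `spike 0 = 0`, so `f ≥ 0`.
def spikeBody : Set (Fin 3 → ℝ) :=
  {v | (v 0, v 1) ∈ parabolicRegion ∧ ∀ n, spike n (v 0, v 1) ≤ v 2 + 1}

theorem convex_spikeBody : Convex ℝ spikeBody := by
  rintro v ⟨⟨hv, hv'⟩, hvn⟩ w ⟨⟨hw, hw'⟩, hwn⟩ a b ha hb hab
  obtain rfl : b = 1 - a := by linarith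
  simp only [spikeBody, parabolicRegion, mem_ofPred_eq, Pi.add_apply, Pi.smul_apply, smul_eq_mul]
  refine ⟨⟨?_, by nlinarith⟩, fun n => ?_⟩
  · nlinarith [mul_nonneg (mul_nonneg ha hb) (sq_nonneg (v 0 - w 0))]
  · have h1 := mul_le_mul_of_nonneg_left (hvn n) ha
    have h2 := mul_le_mul_of_nonneg_left (hwn n) hb
    simp only [spike] at h1 h2 ⊢
    linarith

theorem isClosed_parabolicRegion : IsClosed parabolicRegion :=
  IsClosed.inter (s₁ := {p : ℝ × ℝ | p.1 ^ 2 ≤ p.2 + 1}) (s₂ := {p | p.2 ≤ 1})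
    (isClosed_le (by fun_prop) (by fun_prop)) (isClosed_le (by fun_prop) (by fun_prop))

theorem isClosed_spikeBody : IsClosed spikeBody := by
  simp only [spikeBody, ofPred_and, ofPred_forall]
  exact (isClosed_parabolicRegion.preimage (by fun_prop)).inter (isClosed_iInter fun n =>
    isClosed_le ((continuous_spike n).comp (by fun_prop)) (by fun_prop))

theorem spike_nonpos_of_abs_le {x y : ℝ} (hx : |x| ≤ 1 / 8) (hy : |y| ≤ 1 / 8) (n : ℕ) :
    spike n (x, y) ≤ 0 := by
  obtain ⟨hx1, hx2⟩ := abs_le.1 hx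
  obtain ⟨hy1, hy2⟩ := abs_le.1 hy
  rcases Nat.eq_zero_or_pos n with rfl | hn
  · simp [spike_zero]
  have hn1 : (1 : ℝ) ≤ n := by exact_mod_cast hn
  have : 1 ≤ (n : ℝ) ^ 2 * (y + 1) - 2 * n * x + 1 := by nlinarith
  simp only [spike]
  nlinarith [pow_le_pow_left₀ zero_le_one hn1 3]

theorem mem_spikeBody_of_abs_le {v : Fin 3 → ℝ} (h0 : |v 0| ≤ 1 / 8) (h1 : |v 1| ≤ 1 / 8)
    (h2 : -1 ≤ v 2) : v ∈ spikeBody := by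
  obtain ⟨h0', h0''⟩ := abs_le.1 h0
  obtain ⟨h1', h1''⟩ := abs_le.1 h1
  exact ⟨⟨by nlinarith, by linarith⟩, fun n => by linarith [spike_nonpos_of_abs_le h0 h1 n]⟩

theorem spikeBody_mem_nhds_zero : spikeBody ∈ 𝓝 (0 : Fin 3 → ℝ) := by
  refine mem_of_superset (Metric.ball_mem_nhds 0 (by norm_num : (0 : ℝ) < 1 / 8)) fun v hv => ?_
  rw [mem_ball_zero_iff] at hv
  have hi : ∀ i, |v i| ≤ 1 / 8 := fun i => ((norm_le_pi_norm v i).trans hv.le)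
  exact mem_spikeBody_of_abs_le (hi 0) (hi 1) (by linarith [neg_abs_le (v 2), hi 2])

theorem absorbent_spikeBody : Absorbent ℝ spikeBody :=
  absorbent_nhds_zero spikeBody_mem_nhds_zero

noncomputable def spikeNorm : (Fin 3 → ℝ) → ℝ := gauge spikeBody

theorem spikeNorm_add_le (v w : Fin 3 → ℝ) : spikeNorm (v + w) ≤ spikeNorm v + spikeNorm w :=
  gauge_add_le convex_spikeBody absorbent_spikeBody v w

theorem spikeNorm_le_of_abs_le {v : Fin 3 → ℝ} {r : ℝ} (hr : 0 < r) (h0 : |v 0| ≤ r)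
    (h1 : |v 1| ≤ r) (h2 : -r ≤ v 2) : spikeNorm v ≤ 8 * r := by
  refine gauge_le_of_mem (by positivity) ?_
  rw [mem_smul_set_iff_inv_smul_mem₀ (by positivity)]
  have hc : |(8 * r)⁻¹| = (8 * r)⁻¹ := abs_of_pos (by positivity)
  have key : ∀ a, |a| ≤ r → |(8 * r)⁻¹ * a| ≤ 1 / 8 := fun a ha => by
    rw [abs_mul, hc, inv_mul_le_iff₀ (by positivity)]; linarith
  refine mem_spikeBody_of_abs_le (key _ h0) (key _ h1) ?_
  simp only [Pi.smul_apply, smul_eq_mul]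
  rw [le_inv_mul_iff₀ (by positivity)]
  linarith

theorem spikeNorm_vertical {c : ℝ} (hc : 0 ≤ c) : spikeNorm ![0, 0, c] = 0 := by
  refine le_antisymm (le_of_forall_pos_le_add fun ε hε => ?_) (gauge_nonneg _)
  have := spikeNorm_le_of_abs_le (v := ![0, 0, c]) (r := ε / 8) (by positivity)
    (by simp; positivity) (by simp; positivity) (by simp; linarith)
  linarith

theorem coord_le_spikeNorm (i : Fin 3) (c : ℝ) (h : ∀ w ∈ spikeBody, c * w i ≤ 1)
    (v : Fin 3 → ℝ) : c * v i ≤ spikeNorm v := by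
  simpa [spikeNorm] using le_gauge_of_forall_le_one absorbent_spikeBody
    (φ := c • (LinearMap.proj i : (Fin 3 → ℝ) →ₗ[ℝ] ℝ)) (by simpa using h) v

theorem abs_coords_le_spikeNorm (v : Fin 3 → ℝ) :
    |v 0| ≤ 2 * spikeNorm v ∧ |v 1| ≤ spikeNorm v ∧ -v 2 ≤ spikeNorm v := by
  have hb : ∀ w ∈ spikeBody, |w 0| ≤ 2 ∧ |w 1| ≤ 1 ∧ -w 2 ≤ 1 := by
    rintro w ⟨⟨hw, hw'⟩, hwn⟩
    refine ⟨abs_le.2 ⟨by nlinarith, by nlinarith⟩, abs_le.2 ⟨by nlinarith, hw'⟩, ?_⟩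
    linarith [hwn 0, spike_zero (w 0, w 1)]
  have h0 := coord_le_spikeNorm 0 (1 / 2)
    (fun w hw => by linarith [le_abs_self (w 0), (hb w hw).1]) v
  have h0' := coord_le_spikeNorm 0 (-1 / 2)
    (fun w hw => by linarith [neg_abs_le (w 0), (hb w hw).1]) v
  have h1 := coord_le_spikeNorm 1 1
    (fun w hw => by linarith [le_abs_self (w 1), (hb w hw).2.1]) v
  have h1' := coord_le_spikeNorm 1 (-1)
    (fun w hw => by linarith [neg_abs_le (w 1), (hb w hw).2.1]) v
  have h2 := coord_le_spikeNorm 2 (-1) (fun w hw => by linarith [(hb w hw).2.2]) v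
  exact ⟨abs_le.2 ⟨by linarith, by linarith⟩, abs_le.2 ⟨by linarith, by linarith⟩, by linarith⟩

theorem isAsymmetricNorm_spikeNorm : IsAsymmetricNorm spikeNorm where
  nonneg := gauge_nonneg
  smul_eq a ha v := by rw [spikeNorm, gauge_smul_of_nonneg ha, smul_eq_mul]
  add_le := spikeNorm_add_le
  eq_zero v h h' := by
    obtain ⟨h0, h1, h2⟩ := abs_coords_le_spikeNorm v
    obtain ⟨-, -, h2'⟩ := abs_coords_le_spikeNorm (-v)
    rw [h] at h0 h1 h2
    rw [h', Pi.neg_apply, neg_neg] at h2'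
    ext i
    fin_cases i
    · simpa using h0
    · simpa using h1
    · show v 2 = 0; linarith

theorem closedBallA_spikeNorm : closedBallA spikeNorm 0 1 = spikeBody := by
  ext v
  rw [closedBallA, mem_ofPred_eq, sub_zero, spikeNorm,
    gauge_le_one_iff_mem_closure convex_spikeBody spikeBody_mem_nhds_zero,
    isClosed_spikeBody.closure_eq]

theorem isCompact_parabolicRegion : IsCompact parabolicRegion := by
  refine (isCompact_Icc (a := ((-2 : ℝ), (-1 : ℝ))) (b := (2, 1))).of_isClosed_subset
    isClosed_parabolicRegion fun p ⟨h1, h2⟩ => ?_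
  exact ⟨⟨by nlinarith, by nlinarith⟩, ⟨by nlinarith, h2⟩⟩

noncomputable def spikeLift (p : ℝ × ℝ) : Fin 3 → ℝ := ![p.1, p.2, spikeHeight p - 1]

theorem spikeLift_mem_spikeBody {p : ℝ × ℝ} (hp : p ∈ parabolicRegion) :
    spikeLift p ∈ spikeBody :=
  ⟨by simpa [spikeLift] using hp, fun n => by simpa [spikeLift] using spike_le_spikeHeight hp n⟩

theorem spikeBody_subset_image_add_theta :
    spikeBody ⊆ spikeLift '' parabolicRegion + theta spikeNorm := by
  rintro v ⟨hv, hvn⟩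
  refine ⟨spikeLift (v 0, v 1), mem_image_of_mem _ hv,
    ![0, 0, v 2 + 1 - spikeHeight (v 0, v 1)], spikeNorm_vertical ?_, ?_⟩
  · linarith [show spikeHeight _ ≤ _ from ciSup_le hvn]
  · ext i; fin_cases i <;> simp [spikeLift]

theorem continuousOn_spikeLift :
    @ContinuousOn _ _ _ (asymTop spikeNorm) spikeLift parabolicRegion := by
  intro p hp
  refine tendsto_asymTop_of_forall_eventually_lt spikeNorm_add_le fun ε hε => ?_
  have hε' : 0 < ε / 16 := by positivity
  filter_upwards [lowerSemicontinuousOn_spikeHeight p hp _ (sub_lt_self _ hε'),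
    mem_nhdsWithin_of_mem_nhds (Metric.ball_mem_nhds p hε')] with p' hh hd
  rw [Metric.mem_ball, Prod.dist_eq, max_lt_iff, Real.dist_eq, Real.dist_eq] at hd
  have := spikeNorm_le_of_abs_le (v := spikeLift p' - spikeLift p) hε'
    (by simpa [spikeLift] using hd.1.le) (by simpa [spikeLift] using hd.2.le)
    (by simp [spikeLift]; linarith)
  linarith

theorem isCompact_spikeBody : @IsCompact _ (asymTop spikeNorm) spikeBody :=
  isCompact_asymTop_of_subset_add_theta spikeNorm_add_le
    (@IsCompact.image_of_continuousOn _ _ _ (asymTop spikeNorm) _ _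
      isCompact_parabolicRegion continuousOn_spikeLift)
    (image_subset_iff.2 fun _ => spikeLift_mem_spikeBody) spikeBody_subset_image_add_theta

theorem not_stronglyCompact_spikeBody : ¬ StronglyCompact spikeNorm spikeBody := by
  rintro ⟨S, hS, hSB, hBS⟩
  obtain ⟨R, hR⟩ := exists_forall_lt_of_isCompact_asymTop hS
  obtain ⟨n, hn⟩ := exists_nat_gt (R + 1)
  obtain ⟨s, hs, t, ht, hst⟩ := hBS (spikeLift_mem_spikeBody (apex_mem n))
  obtain ⟨ht0, ht1, -⟩ := abs_coords_le_spikeNorm t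
  simp only [show spikeNorm t = 0 from ht, mul_zero, abs_nonpos_iff] at ht0 ht1
  have hs_apex : (s 0, s 1) = apex n := by
    have h0 := congrFun hst 0
    have h1 := congrFun hst 1
    simp only [Pi.add_apply, ht0, ht1, add_zero, spikeLift] at h0 h1
    ext <;> simp [h0, h1]
  have hlow : (n : ℝ) ≤ s 2 + 1 := by simpa [hs_apex, spike_apex] using (hSB hs).2 n
  have hupp : s 2 < R := calc
    s 2 = -(-s) 2 := by simp
    _ ≤ spikeNorm (-s) := (abs_coords_le_spikeNorm (-s)).2.2
    _ ≤ symNorm spikeNorm s := le_max_right _ _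
    _ < R := hR s hs
  linarith

theorem statement16 :
    ∃ q : (Fin 3 → ℝ) → ℝ, IsAsymmetricNorm q ∧
      @IsCompact (Fin 3 → ℝ) (asymTop q) (closedBallA q 0 1) ∧
      ¬ StronglyCompact q (closedBallA q 0 1) := by
  refine ⟨spikeNorm, isAsymmetricNorm_spikeNorm, ?_, ?_⟩ <;> rw [closedBallA_spikeNorm]
  · exact isCompact_spikeBody
  · exact not_stronglyCompact_spikeBody
end
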